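/- arXiv:2107.13615 — 5 statements merged into one kernel-verified Lean document; each statement's English description precedes it below -/
import Mathlib

section
/- Let n ≥ 1 and let c_1,…,c_n be integers with c_i ≥ 2 for all i. Then there exists an n-PTMC S in Λ_n such that the connected components of the subgraph of Λ_n induced by S are exactly the boxes B_z = {v ∈ ℤ^n : z_i(c_i+1)+1 ≤ v_i ≤ z_i(c_i+1)+c_i−1 for all i}, for z ∈ ℤ^n (each a translate of the box Π_{i=1}^n {0,…,c_i−2}, i.e. a cartesian product of paths of length c_i−2), and such that any two distinct components are at ℓ1-distance at least 3, this minimum distance 3 being attained. -/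
/-- The `n`-dimensional grid graph `Λ_n` on `ℤ^n`: two vertices are adjacent
iff their `ℓ1`-distance is `1`. -/
def gridGraph (n : ℕ) : SimpleGraph (Fin n → ℤ) where
  Adj u v := ∑ i, |u i - v i| = 1
  symm := by
    constructor
    intro u v h
    have : ∑ i, |v i - u i| = ∑ i, |u i - v i| :=
      Finset.sum_congr rfl fun i _ => abs_sub_comm _ _
    rw [this]; exact h
  loopless := by
    constructor
    intro u h
    simp at h

/-- The truncated distance `ρ` on `ℤ^n` (valued in `ℕ`): the Hamming distance if
all coordinates differ by at most `1`, and `n+1` otherwise. -/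
def trho (n : ℕ) (u v : Fin n → ℤ) : ℕ :=
  if ∀ i, |u i - v i| ≤ 1 then (Finset.univ.filter fun i => u i ≠ v i).card
  else n + 1

/-- Truncated distance from a point to a set, as the infimum of truncated distances. -/
noncomputable def trhoSet (n : ℕ) (u : Fin n → ℤ) (S : Set (Fin n → ℤ)) : ℕ :=
  sInf {d | ∃ s ∈ S, trho n u s = d}

/-- The vertex set (in `ℤ^n`) of a connected component `H` of the subgraph of `Λ_n`
induced by `S`. -/
def compVerts (n : ℕ) (S : Set (Fin n → ℤ))
    (H : ((gridGraph n).induce S).ConnectedComponent) : Set (Fin n → ℤ) :=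
  {v | ∃ h : v ∈ S, ((gridGraph n).induce S).connectedComponentMk ⟨v, h⟩ = H}

/-- `S` is a `t`-perfect truncated-metric code in `Λ_n`. -/
def IsPTMC (n t : ℕ) (S : Set (Fin n → ℤ)) : Prop :=
  (∀ u : Fin n → ℤ, ∃! s, s ∈ S ∧ trho n u s = trhoSet n u S) ∧
  (∀ u : Fin n → ℤ, ∃! H : ((gridGraph n).induce S).ConnectedComponent,
    trhoSet n u (compVerts n S H) ≤ t)

/-!
Cut each axis into blocks of `c i + 1` consecutive integers and keep the `c i - 1` interior
ones; the code is the union of the products `B_z` of these interiors. Boxes with different block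
indices are at `ℓ1`-distance at least `3`, so the induced components are exactly the boxes.
Coordinatewise, every integer is within distance one of its own block's interior, and a point
that is already interior is its own nearest code value. Hence every codeword at truncated
distance at most `n` from `u` lies in the box of `u`'s block indices and differs from `u` in
every coordinate where the coordinatewise nearest point does, with equality only at that point:
it is the unique closest codeword, and its box the unique component within truncated distance `n`.
-/

open SimpleGraph

/-- The blocks `[z(m+1), z(m+1)+m]` tile `ℤ`; row `z` is the interior of block `z`, so the box
`B_z` is the product of the rows `z i` with `m = c i`. -/
def InRow (m z x : ℤ) : Prop := z * (m + 1) + 1 ≤ x ∧ x ≤ z * (m + 1) + m - 1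

/-- Moves the two block ends (residues `0` and `m`) one step into the row. -/
def rowNearest (m x : ℤ) : ℤ :=
  if x % (m + 1) = 0 then x + 1 else if x % (m + 1) = m then x - 1 else x

section Row
variable {m z z' x y : ℤ}

lemma ediv_mul_add_emod_of_nonneg (hm : 0 ≤ m) (x : ℤ) :
    x = x / (m + 1) * (m + 1) + x % (m + 1) ∧ 0 ≤ x % (m + 1) ∧ x % (m + 1) ≤ m := by
  have hpos : 0 < m + 1 := by omega
  have := Int.mul_ediv_add_emod x (m + 1)
  have := Int.emod_lt_of_pos x hpos
  exact ⟨by linarith, Int.emod_nonneg x hpos.ne', by omega⟩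

lemma InRow.two_le (h : InRow m z x) : 2 ≤ m := by
  unfold InRow at h; omega

lemma InRow.ediv_eq (h : InRow m z x) : x / (m + 1) = z := by
  have hpos : 0 < m + 1 := by have := h.two_le; omega
  unfold InRow at h
  exact ((Int.ediv_emod_unique hpos (r := x - z * (m + 1))).2
    ⟨by ring, by linarith, by linarith⟩).1

lemma InRow.three_le_abs_sub (h : InRow m z x) (h' : InRow m z' y) (hne : z ≠ z') :
    3 ≤ |x - y| := by
  have hm := h.two_le
  unfold InRow at h h'
  rcases hne.lt_or_gt with hlt | hlt
  · have : (z + 1) * (m + 1) ≤ z' * (m + 1) := by gcongr; omega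
    rw [abs_sub_comm, abs_of_nonneg (by linarith)]
    linarith
  · have : (z' + 1) * (m + 1) ≤ z * (m + 1) := by gcongr; omega
    rw [abs_of_nonneg (by linarith)]
    linarith

lemma inRow_rowNearest (hm : 2 ≤ m) (x : ℤ) : InRow m (x / (m + 1)) (rowNearest m x) := by
  obtain ⟨hx, h0, h1⟩ := ediv_mul_add_emod_of_nonneg (by omega : 0 ≤ m) x
  unfold InRow rowNearest
  split_ifs <;> omega

lemma abs_sub_rowNearest_le (m x : ℤ) : |x - rowNearest m x| ≤ 1 := by
  unfold rowNearest; split_ifs <;> simp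

lemma InRow.ediv_eq_of_abs_sub_le (h : InRow m z y) (hxy : |x - y| ≤ 1) :
    x / (m + 1) = z := by
  by_contra hne
  have := (inRow_rowNearest h.two_le x).three_le_abs_sub h hne
  have := abs_sub_le (rowNearest m x) x y
  rw [abs_sub_comm (rowNearest m x) x] at this
  linarith [abs_sub_rowNearest_le m x]

lemma not_inRow_of_rowNearest_ne (hx : rowNearest m x ≠ x) : ¬ InRow m z x := by
  intro h
  obtain rfl := h.ediv_eq
  obtain ⟨hx', h0, h1⟩ := ediv_mul_add_emod_of_nonneg (by linarith [h.two_le] : 0 ≤ m) x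
  unfold InRow at h
  unfold rowNearest at hx
  split_ifs at hx <;> omega

lemma InRow.eq_rowNearest (h : InRow m z y) (hxy : |x - y| ≤ 1) (hx : rowNearest m x ≠ x) :
    y = rowNearest m x := by
  obtain rfl := h.ediv_eq_of_abs_sub_le hxy
  obtain ⟨hx', h0, h1⟩ := ediv_mul_add_emod_of_nonneg (by linarith [h.two_le] : 0 ≤ m) x
  unfold InRow at h
  rw [abs_le] at hxy
  unfold rowNearest at hx ⊢
  split_ifs at hx ⊢ <;> omega

end Row

section Box
variable {n : ℕ} (c : Fin n → ℤ)

def box (z : Fin n → ℤ) : Set (Fin n → ℤ) := {v | ∀ i, InRow (c i) (z i) (v i)}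

def boxCode : Set (Fin n → ℤ) := {v | ∃ z, v ∈ box c z}

def boxIndex (v : Fin n → ℤ) : Fin n → ℤ := fun i => v i / (c i + 1)

def nearestCodeword (u : Fin n → ℤ) : Fin n → ℤ := fun i => rowNearest (c i) (u i)

variable {c}

lemma boxIndex_eq_of_mem_box {z v : Fin n → ℤ} (h : v ∈ box c z) : boxIndex c v = z :=
  funext fun i => (h i).ediv_eq

lemma mem_box_boxIndex {v : Fin n → ℤ} (h : v ∈ boxCode c) : v ∈ box c (boxIndex c v) := by
  obtain ⟨z, hz⟩ := h
  rwa [boxIndex_eq_of_mem_box hz]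

lemma corner_mem_box (hc : ∀ i, 2 ≤ c i) (z : Fin n → ℤ) :
    (fun i => z i * (c i + 1) + 1) ∈ box c z := fun i => ⟨le_rfl, by linarith [hc i]⟩

lemma nearestCodeword_mem_box (hc : ∀ i, 2 ≤ c i) (u : Fin n → ℤ) :
    nearestCodeword c u ∈ box c (boxIndex c u) := fun i => inRow_rowNearest (hc i) (u i)

lemma mem_box_boxIndex_of_abs_sub_le {u s : Fin n → ℤ} (hs : s ∈ boxCode c)
    (h : ∀ i, |u i - s i| ≤ 1) : s ∈ box c (boxIndex c u) := by
  obtain ⟨z, hz⟩ := hs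
  rwa [show boxIndex c u = z from funext fun i => (hz i).ediv_eq_of_abs_sub_le (h i)]

lemma three_le_sum_abs_sub {z z' a b : Fin n → ℤ} (ha : a ∈ box c z) (hb : b ∈ box c z')
    (hne : z ≠ z') : 3 ≤ ∑ i, |a i - b i| := by
  obtain ⟨i, hi⟩ := Function.ne_iff.mp hne
  exact ((ha i).three_le_abs_sub (hb i) hi).trans
    (Finset.single_le_sum (fun j _ => abs_nonneg (a j - b j)) (Finset.mem_univ i))

lemma exists_adj_mem_box_sum_abs_sub_lt {z a b : Fin n → ℤ} (ha : a ∈ box c z)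
    (hb : b ∈ box c z) (hab : a ≠ b) :
    ∃ a' ∈ box c z, (gridGraph n).Adj a a' ∧ ∑ i, |a' i - b i| < ∑ i, |a i - b i| := by
  obtain ⟨i, hi⟩ := Function.ne_iff.mp hab
  set t := if a i < b i then a i + 1 else a i - 1
  have ht : |a i - t| = 1 ∧ |t - b i| < |a i - b i| := by
    simp only [t, abs_eq_max_neg]; split_ifs <;> omega
  have hti : InRow (c i) (z i) t := by
    have := ha i; have := hb i
    unfold InRow at *; simp only [t]; split_ifs <;> omega
  refine ⟨Function.update a i t, fun j => ?_, ?_, ?_⟩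
  · rcases eq_or_ne j i with rfl | hj
    · simpa using hti
    · simpa [hj] using ha j
  · show ∑ j, |a j - Function.update a i t j| = 1
    rw [Finset.sum_eq_single i (fun j _ hj => by simp [hj]) (by simp)]
    simpa using ht.1
  · refine Finset.sum_lt_sum (fun j _ => ?_) ⟨i, Finset.mem_univ i, by simpa using ht.2⟩
    rcases eq_or_ne j i with rfl | hj
    · simpa using ht.2.le
    · simp [hj]

end Box

section Components
variable {n : ℕ} {c : Fin n → ℤ}

lemma mem_compVerts_connectedComponentMk {S : Set (Fin n → ℤ)} (v : S) :
    v.1 ∈ compVerts n S (((gridGraph n).induce S).connectedComponentMk v) :=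
  ⟨v.2, rfl⟩

lemma reachable_of_mem_box {z : Fin n → ℤ} {a b : boxCode c} (ha : a.1 ∈ box c z)
    (hb : b.1 ∈ box c z) : ((gridGraph n).induce (boxCode c)).Reachable a b := by
  induction hN : (∑ i, |a.1 i - b.1 i|).toNat using Nat.strong_induction_on generalizing a with
  | _ N ih =>
  by_cases hab : a = b
  · exact hab ▸ .rfl
  obtain ⟨a', ha', hadj, hlt⟩ :=
    exists_adj_mem_box_sum_abs_sub_lt ha hb fun h => hab (Subtype.ext h)
  have hnonneg : 0 ≤ ∑ i, |a' i - b.1 i| := Finset.sum_nonneg fun i _ => abs_nonneg _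
  exact (Adj.reachable (G := (gridGraph n).induce (boxCode c)) (v := ⟨a', z, ha'⟩) hadj).trans
    (ih (∑ i, |a' i - b.1 i|).toNat (by omega) (a := ⟨a', z, ha'⟩) ha' rfl)

lemma boxIndex_eq_of_adj {v w : boxCode c} (h : ((gridGraph n).induce (boxCode c)).Adj v w) :
    boxIndex c v = boxIndex c w := by
  by_contra hne
  have h3 := three_le_sum_abs_sub (mem_box_boxIndex v.2) (mem_box_boxIndex w.2) hne
  have h1 : ∑ i, |v.1 i - w.1 i| = 1 := h
  omega

lemma connectedComponentMk_eq_iff {v w : boxCode c} :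
    ((gridGraph n).induce (boxCode c)).connectedComponentMk v =
        ((gridGraph n).induce (boxCode c)).connectedComponentMk w ↔
      boxIndex c v = boxIndex c w := by
  refine ⟨fun h => ?_, fun h => ConnectedComponent.sound
    (reachable_of_mem_box (mem_box_boxIndex v.2) (h ▸ mem_box_boxIndex w.2))⟩
  obtain ⟨p⟩ := ConnectedComponent.exact h
  clear h
  induction p with
  | nil => rfl
  | cons hadj _ ih => exact (boxIndex_eq_of_adj hadj).trans ih

lemma compVerts_connectedComponentMk (v : boxCode c) :
    compVerts n (boxCode c) (((gridGraph n).induce (boxCode c)).connectedComponentMk v) =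
      box c (boxIndex c v) := by
  ext w
  constructor
  · rintro ⟨hw, hmk⟩
    rw [← connectedComponentMk_eq_iff.1 hmk]
    exact mem_box_boxIndex hw
  · intro hw
    exact ⟨⟨_, hw⟩, connectedComponentMk_eq_iff.2 (boxIndex_eq_of_mem_box hw)⟩

end Components

section TruncatedDistance
variable {n : ℕ} {u : Fin n → ℤ} {S : Set (Fin n → ℤ)}

lemma trho_le_iff {v : Fin n → ℤ} : trho n u v ≤ n ↔ ∀ i, |u i - v i| ≤ 1 := by
  unfold trho
  split_ifs with h
  · exact iff_of_true ((Finset.card_filter_le _ _).trans (by simp)) h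
  · exact iff_of_false (by omega) h

lemma trhoSet_le {s : Fin n → ℤ} (hs : s ∈ S) : trhoSet n u S ≤ trho n u s :=
  Nat.sInf_le ⟨s, hs, rfl⟩

lemma trhoSet_eq_of_forall_le {s₀ : Fin n → ℤ} (hs₀ : s₀ ∈ S)
    (h : ∀ s ∈ S, trho n u s₀ ≤ trho n u s) : trhoSet n u S = trho n u s₀ :=
  IsLeast.csInf_eq ⟨⟨s₀, hs₀, rfl⟩, by rintro _ ⟨s, hs, rfl⟩; exact h s hs⟩

lemma exists_trho_eq_trhoSet (hS : S.Nonempty) : ∃ s ∈ S, trho n u s = trhoSet n u S :=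
  Nat.sInf_mem (hS.image (trho n u))

end TruncatedDistance

section Code
variable {n : ℕ} {c : Fin n → ℤ}

lemma nearestCodeword_mem_boxCode (hc : ∀ i, 2 ≤ c i) (u : Fin n → ℤ) :
    nearestCodeword c u ∈ boxCode c :=
  ⟨_, nearestCodeword_mem_box hc u⟩

lemma trho_nearestCodeword_lt {u s : Fin n → ℤ} (hs : s ∈ boxCode c)
    (hne : s ≠ nearestCodeword c u) : trho n u (nearestCodeword c u) < trho n u s := by
  have hnear : ∀ i, |u i - nearestCodeword c u i| ≤ 1 := fun i => abs_sub_rowNearest_le _ _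
  by_cases hclose : ∀ i, |u i - s i| ≤ 1
  swap
  · have : trho n u s = n + 1 := if_neg hclose
    exact (trho_le_iff.2 hnear).trans_lt (this ▸ Nat.lt_succ_self n)
  have hbox := mem_box_boxIndex_of_abs_sub_le hs hclose
  simp only [trho, if_pos hnear, if_pos hclose]
  refine Finset.card_lt_card ⟨fun i => ?_, fun hsub => ?_⟩
  · simp only [Finset.mem_filter, Finset.mem_univ, true_and]
    exact fun hi heq => not_inRow_of_rowNearest_ne (Ne.symm hi) (heq ▸ hbox i)
  · obtain ⟨i, hi⟩ := Function.ne_iff.mp hne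
    have hui : u i = nearestCodeword c u i := by
      by_contra hui
      exact hi ((hbox i).eq_rowNearest (hclose i) (Ne.symm hui))
    have := @hsub i
    simp only [Finset.mem_filter, Finset.mem_univ, true_and] at this
    exact this (hui ▸ hi.symm) hui

theorem isPTMC_boxCode (hc : ∀ i, 2 ≤ c i) : IsPTMC n n (boxCode c) := by
  refine ⟨fun u => ?_, fun u => ?_⟩
  · have hmin : trhoSet n u (boxCode c) = trho n u (nearestCodeword c u) :=
      trhoSet_eq_of_forall_le (nearestCodeword_mem_boxCode hc u) fun s hs =>
        (eq_or_ne s (nearestCodeword c u)).elim (fun h => h ▸ le_rfl)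
          fun h => (trho_nearestCodeword_lt hs h).le
    refine ⟨nearestCodeword c u, ⟨nearestCodeword_mem_boxCode hc u, hmin.symm⟩, ?_⟩
    rintro s ⟨hs, hs_eq⟩
    by_contra hne
    exact (trho_nearestCodeword_lt hs hne).ne' (hs_eq.trans hmin)
  · let G := (gridGraph n).induce (boxCode c)
    let w₀ : boxCode c := ⟨_, nearestCodeword_mem_boxCode hc u⟩
    have hw₀ : trhoSet n u (compVerts n (boxCode c) (G.connectedComponentMk w₀)) ≤ n :=
      (trhoSet_le (mem_compVerts_connectedComponentMk w₀)).trans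
        (trho_le_iff.2 fun i => abs_sub_rowNearest_le _ _)
    refine ⟨G.connectedComponentMk w₀, hw₀, fun H hH => ?_⟩
    induction H using ConnectedComponent.ind with | h w =>
    obtain ⟨s, ⟨hs, hsw⟩, hs_eq⟩ :=
      exists_trho_eq_trhoSet (u := u) ⟨_, mem_compVerts_connectedComponentMk w⟩
    have hclose : ∀ i, |u i - s i| ≤ 1 := trho_le_iff.1 (hs_eq ▸ hH)
    rw [← hsw, connectedComponentMk_eq_iff,
      boxIndex_eq_of_mem_box (mem_box_boxIndex_of_abs_sub_le hs hclose),
      boxIndex_eq_of_mem_box (nearestCodeword_mem_box hc u)]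

lemma exists_sum_abs_sub_eq_three (hc : ∀ i, 2 ≤ c i) (i₀ : Fin n) :
    ∃ a ∈ box c 0, ∃ b ∈ box c (Pi.single i₀ 1), ∑ i, |a i - b i| = 3 := by
  refine ⟨Function.update 1 i₀ (c i₀ - 1), fun i => ?_,
    Function.update 1 i₀ (c i₀ + 2), fun i => ?_, ?_⟩
  · have := hc i
    rcases eq_or_ne i i₀ with rfl | hi <;> simp [InRow, *] <;> omega
  · have := hc i
    rcases eq_or_ne i i₀ with rfl | hi <;> simp [InRow, *] <;> omega
  · rw [Finset.sum_eq_single i₀ (fun j _ hj => by simp [hj]) (by simp)]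
    simp [show c i₀ - 1 - (c i₀ + 2) = -3 by ring]

end Code

/-- For any integers `c i ≥ 2` there is an `n`-PTMC in `Λ_n` whose
induced components are exactly the boxes `B_z`, translates of `Π_i {0,…,c i − 2}`,
with pairwise `ℓ1`-distance at least 3 between distinct components, distance 3 attained. -/
theorem stmt_1 (n : ℕ) (hn : 1 ≤ n) (c : Fin n → ℤ) (hc : ∀ i, 2 ≤ c i) :
    ∃ S : Set (Fin n → ℤ), IsPTMC n n S ∧
      (∀ H : ((gridGraph n).induce S).ConnectedComponent, ∃ z : Fin n → ℤ,
        compVerts n S H =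
          {v : Fin n → ℤ | ∀ i, z i * (c i + 1) + 1 ≤ v i ∧ v i ≤ z i * (c i + 1) + c i - 1}) ∧
      (∀ z : Fin n → ℤ, ∃ H : ((gridGraph n).induce S).ConnectedComponent,
        compVerts n S H =
          {v : Fin n → ℤ | ∀ i, z i * (c i + 1) + 1 ≤ v i ∧ v i ≤ z i * (c i + 1) + c i - 1}) ∧
      (∀ H H' : ((gridGraph n).induce S).ConnectedComponent, H ≠ H' →
        ∀ a ∈ compVerts n S H, ∀ b ∈ compVerts n S H', 3 ≤ ∑ i, |a i - b i|) ∧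
      (∃ H H' : ((gridGraph n).induce S).ConnectedComponent, H ≠ H' ∧
        ∃ a ∈ compVerts n S H, ∃ b ∈ compVerts n S H', ∑ i, |a i - b i| = 3) := by
  let G := (gridGraph n).induce (boxCode c)
  refine ⟨boxCode c, isPTMC_boxCode hc, fun H => ?_, fun z => ?_, ?_, ?_⟩
  · induction H using ConnectedComponent.ind with | h v =>
    exact ⟨boxIndex c v, compVerts_connectedComponentMk v⟩
  · refine ⟨G.connectedComponentMk ⟨_, z, corner_mem_box hc z⟩, ?_⟩
    rw [compVerts_connectedComponentMk, boxIndex_eq_of_mem_box (corner_mem_box hc z)]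
    rfl
  · rintro H H' hne a ⟨ha, rfl⟩ b ⟨hb, rfl⟩
    rw [Ne, connectedComponentMk_eq_iff] at hne
    exact three_le_sum_abs_sub (mem_box_boxIndex ha) (mem_box_boxIndex hb) hne
  · obtain ⟨a, ha, b, hb, hab⟩ := exists_sum_abs_sub_eq_three hc ⟨0, hn⟩
    refine ⟨G.connectedComponentMk ⟨a, _, ha⟩, G.connectedComponentMk ⟨b, _, hb⟩, ?_,
      a, mem_compVerts_connectedComponentMk _, b, mem_compVerts_connectedComponentMk _, hab⟩
    rw [Ne, connectedComponentMk_eq_iff, boxIndex_eq_of_mem_box ha, boxIndex_eq_of_mem_box hb]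
    exact fun h => by simpa using congrFun h ⟨0, hn⟩
end

section
/- Let n ≥ 3 be an integer. There exists a set S ⊆ ℤ^n and an (n−1)-element subset A of the coordinate indices {1,…,n} such that, writing C = {v ∈ ℤ^n : v_i ∈ {0,1} for i ∈ A, v_j = 0 for j ∉ A} (a binary (n−1)-cube), the following hold: (a) every connected component of the subgraph of Λ_n induced by S is either a translate of C or a single vertex, and components of both kinds occur; (b) assigning to each component H the radius t_H = 1 if H is a translate of the (n−1)-cube C and t_H = n−2 if H is a singleton, the truncated spheres {u ∈ ℤ^n : ρ(u, V(H)) ≤ t_H}, over all components H, form a partition of ℤ^n; (c) for every u ∈ ℤ^n, if H is the unique component with ρ(u, V(H)) ≤ t_H, then there is a unique w ∈ V(H) with ρ(u,w) = ρ(u, V(H)); (d) S is periodic: there exist positive integers p_1,…,p_n with S + p_i e_i = S for all i. -/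
/-- The translate by `w` of the binary cube supported on the coordinate set `A`:
coordinates in `A` take values `w i` or `w i + 1`, coordinates outside `A` are fixed. -/
def translateCube (n : ℕ) (A : Finset (Fin n)) (w : Fin n → ℤ) : Set (Fin n → ℤ) :=
  {v : Fin n → ℤ | (∀ i ∈ A, v i = w i ∨ v i = w i + 1) ∧ ∀ j ∉ A, v j = w j}

open Finset

section TruncatedDistance

variable {n : ℕ}

lemma abs_sub_le_one_of_trho_le {u v : Fin n → ℤ} (h : trho n u v ≤ n) (i : Fin n) :
    |u i - v i| ≤ 1 := by
  unfold trho at h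
  split_ifs at h with hbox
  · exact hbox i
  · omega

lemma eq_of_trho_le_one {u v : Fin n → ℤ} (h : trho n u v ≤ 1) {i j : Fin n}
    (hj : u j ≠ v j) (hij : i ≠ j) : u i = v i := by
  unfold trho at h
  split_ifs at h
  · by_contra hi
    exact hij (card_le_one.mp h i (by simpa using hi) j (by simpa using hj))
  · have := i.pos
    omega

lemma trho_eq_zero_iff {u v : Fin n → ℤ} : trho n u v = 0 ↔ u = v := by
  unfold trho
  split_ifs with hbox
  · simp [funext_iff]
  · refine ⟨False.elim, ?_⟩
    rintro rfl
    simp at hbox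

lemma trho_update_le_one {u : Fin n → ℤ} {j : Fin n} {c : ℤ} (h : |u j - c| ≤ 1) :
    trho n u (Function.update u j c) ≤ 1 := by
  have hbox : ∀ i, |u i - Function.update u j c i| ≤ 1 := fun i => by
    rcases eq_or_ne i j with rfl | hij
    · simpa using h
    · simp [hij]
  rw [trho, if_pos hbox, card_le_one]
  intro a ha b hb
  simp only [mem_filter, mem_univ, true_and] at ha hb
  have hne : ∀ i, u i ≠ Function.update u j c i → i = j := fun i hi => by
    by_contra hij
    simp [hij] at hi
  rw [hne a ha, hne b hb]

lemma card_emod_ne_le_trho (k : ℤ) (u v : Fin n → ℤ) :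
    #{i | u i % k ≠ v i % k} ≤ trho n u v := by
  unfold trho
  split_ifs
  · exact card_le_card fun i => by
      simp only [mem_filter, mem_univ, true_and]
      exact mt (congrArg (· % k))
  · exact (card_filter_le _ _).trans (by simp)

lemma trhoSet_le_s3 {u x : Fin n → ℤ} {P : Set (Fin n → ℤ)} (hx : x ∈ P) :
    trhoSet n u P ≤ trho n u x :=
  Nat.sInf_le ⟨x, hx, rfl⟩

lemma exists_trho_eq_trhoSet_s3 (u : Fin n → ℤ) {P : Set (Fin n → ℤ)} (hP : P.Nonempty) :
    ∃ x ∈ P, trho n u x = trhoSet n u P :=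
  Nat.sInf_mem (hP.image (trho n u))

lemma trhoSet_singleton (u v : Fin n → ℤ) : trhoSet n u {v} = trho n u v := by
  simp [trhoSet]

end TruncatedDistance

lemma gridGraph_adj_iff {n : ℕ} {u v : Fin n → ℤ} :
    (gridGraph n).Adj u v ↔ ∃ k, |u k - v k| = 1 ∧ ∀ i, i ≠ k → u i = v i := by
  change ∑ i, |u i - v i| = 1 ↔ _
  have hnonneg : ∀ i ∈ univ, 0 ≤ |u i - v i| := fun i _ => abs_nonneg _
  constructor
  · intro h
    obtain ⟨k, hk⟩ : ∃ k, u k ≠ v k := by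
      by_contra! hall
      simp [hall] at h
    have hk1 : |u k - v k| ≤ 1 := h ▸ single_le_sum hnonneg (mem_univ k)
    have hk1' : 1 ≤ |u k - v k| := Int.one_le_abs (sub_ne_zero.mpr hk)
    refine ⟨k, le_antisymm hk1 hk1', fun i hi => ?_⟩
    have := h ▸ add_le_sum hnonneg (mem_univ i) (mem_univ k) hi
    exact sub_eq_zero.mp (abs_nonpos_iff.mp (by omega))
  · rintro ⟨k, hk, hrest⟩
    rw [sum_eq_single k (fun i _ hi => by simp [hrest i hi]) (by simp)]
    exact hk

lemma SimpleGraph.induce_component_eq {V : Type*} {G : SimpleGraph V} {S P : Set V}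
    {H : (G.induce S).ConnectedComponent} {v : V}
    (hv : ∃ h : v ∈ S, (G.induce S).connectedComponentMk ⟨v, h⟩ = H) (hvP : v ∈ P)
    (hPS : P ⊆ S) (hclosed : ∀ x ∈ P, ∀ y ∈ S, G.Adj x y → y ∈ P)
    (hconn : ∀ x y (hx : x ∈ P) (hy : y ∈ P), (G.induce S).Reachable ⟨x, hPS hx⟩ ⟨y, hPS hy⟩) :
    {x | ∃ h : x ∈ S, (G.induce S).connectedComponentMk ⟨x, h⟩ = H} = P := by
  obtain ⟨hvS, rfl⟩ := hv
  ext x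
  constructor
  · rintro ⟨hxS, hx⟩
    obtain ⟨p⟩ := SimpleGraph.ConnectedComponent.exact hx.symm
    suffices ∀ {a b : S} (_ : (G.induce S).Walk a b), a.1 ∈ P → b.1 ∈ P from this p hvP
    intro a b p ha
    induction p with
    | nil => exact ha
    | cons hadj _ ih => exact ih (hclosed _ ha _ (Subtype.prop _) hadj)
  · intro hx
    exact ⟨hPS hx, SimpleGraph.ConnectedComponent.sound (hconn x v hx hvP)⟩

section TranslateCube

variable {n : ℕ} {A : Finset (Fin n)} {w : Fin n → ℤ}

lemma mem_translateCube_iff {v : Fin n → ℤ} :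
    v ∈ translateCube n A w ↔ ∀ i, w i ≤ v i ∧ v i ≤ w i + if i ∈ A then 1 else 0 := by
  refine ⟨fun ⟨hA, hA'⟩ i => ?_, fun h => ⟨fun i hi => ?_, fun i hi => ?_⟩⟩
  · split_ifs with hi
    · rcases hA i hi with h | h <;> omega
    · have := hA' i hi
      omega
  · have := h i
    rw [if_pos hi] at this
    omega
  · have := h i
    rw [if_neg hi] at this
    omega

lemma self_mem_translateCube : w ∈ translateCube n A w :=
  ⟨fun _ _ => Or.inl rfl, fun _ _ => rfl⟩

lemma translateCube_ne_singleton (hA : A.Nonempty) (v : Fin n → ℤ) :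
    translateCube n A w ≠ {v} := by
  obtain ⟨i, hi⟩ := hA
  intro h
  have hw : w = v := h.subset self_mem_translateCube
  have hw' : Function.update w i (w i + 1) = v := h.subset <| mem_translateCube_iff.mpr fun k => by
    rcases eq_or_ne k i with rfl | hk
    · simp [hi]
    · simp only [ne_eq, hk, not_false_eq_true, Function.update_of_ne, le_refl, true_and]
      split_ifs <;> omega
  have := congrFun (hw'.trans hw.symm) i
  simp at this

lemma translateCube_reachable {S : Set (Fin n → ℤ)} (hS : translateCube n A w ⊆ S)
    {x y : Fin n → ℤ} (hx : x ∈ translateCube n A w) (hy : y ∈ translateCube n A w) :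
    ((gridGraph n).induce S).Reachable ⟨x, hS hx⟩ ⟨y, hS hy⟩ := by
  induction hk : #{i | x i ≠ y i} generalizing x with
  | zero =>
    obtain rfl : x = y := funext fun i => by
      by_contra hi
      exact absurd hk (card_ne_zero_of_mem (by simpa using hi))
    rfl
  | succ k ih =>
    obtain ⟨j, hj⟩ : ∃ j, x j ≠ y j := by
      by_contra! hall
      simp [hall] at hk
    set x' := Function.update x j (y j)
    have hbox := mem_translateCube_iff.mp hx
    have hboy := mem_translateCube_iff.mp hy
    have hx' : x' ∈ translateCube n A w := mem_translateCube_iff.mpr fun i => by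
      rcases eq_or_ne i j with rfl | hij
      · simpa [x'] using hboy i
      · simpa [x', hij] using hbox i
    have hadj : (gridGraph n).Adj x x' := gridGraph_adj_iff.mpr ⟨j, by
      have := hbox j; have := hboy j
      simp only [x', Function.update_self]
      split_ifs at * <;> rw [abs_eq (by norm_num)] <;> omega,
      fun i hij => by simp [x', hij]⟩
    have hcard : #{i | x' i ≠ y i} = k := by
      have : ({i | x' i ≠ y i} : Finset _) = ({i | x i ≠ y i} : Finset _).erase j := by
        ext i
        rcases eq_or_ne i j with rfl | hij <;> simp [x', *]
      rw [this, card_erase_of_mem (by simpa using hj), hk, Nat.add_sub_cancel]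
    have hadj' : ((gridGraph n).induce S).Adj ⟨x, hS hx⟩ ⟨x', hS hx'⟩ := hadj
    exact hadj'.reachable.trans (ih hx' hcard)

lemma eq_of_trho_le_one_of_not_mem_translateCube {u x y : Fin n → ℤ}
    (hu : u ∉ translateCube n A w) (hx : x ∈ translateCube n A w) (hy : y ∈ translateCube n A w)
    (hux : trho n u x ≤ 1) (huy : trho n u y ≤ 1) : x = y := by
  rw [mem_translateCube_iff] at hu hx hy
  push Not at hu
  obtain ⟨j, hj⟩ := hu
  have hxj : u j ≠ x j := fun h => by have := hx j; split_ifs at * <;> omega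
  have hyj : u j ≠ y j := fun h => by have := hy j; split_ifs at * <;> omega
  funext i
  rcases eq_or_ne i j with rfl | hij
  · have := hx i; have := hy i
    have := abs_le.mp (abs_sub_le_one_of_trho_le (hux.trans i.pos) i)
    have := abs_le.mp (abs_sub_le_one_of_trho_le (huy.trans i.pos) i)
    split_ifs at * <;> omega
  · rw [← eq_of_trho_le_one hux hxj hij, ← eq_of_trho_le_one huy hyj hij]

lemma existsUnique_nearest_translateCube {u : Fin n → ℤ}
    (h : trhoSet n u (translateCube n A w) ≤ 1) :
    ∃! x, x ∈ translateCube n A w ∧ trho n u x = trhoSet n u (translateCube n A w) := by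
  obtain ⟨x, hx, hxd⟩ := exists_trho_eq_trhoSet_s3 u ⟨w, self_mem_translateCube⟩
  refine ⟨x, ⟨hx, hxd⟩, fun y ⟨hy, hyd⟩ => ?_⟩
  by_cases hu : u ∈ translateCube n A w
  · have h0 : trhoSet n u (translateCube n A w) = 0 :=
      Nat.le_zero.mp ((trhoSet_le_s3 hu).trans_eq (trho_eq_zero_iff.mpr rfl))
    rw [h0, trho_eq_zero_iff] at hxd hyd
    rw [← hxd, ← hyd]
  · exact eq_of_trho_le_one_of_not_mem_translateCube hu hy hx (hyd ▸ h) (hxd ▸ h)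

end TranslateCube

section Code

variable {m : ℕ}

def cubeAxes (m : ℕ) : Finset (Fin (m + 1)) := {Fin.last m}ᶜ

@[simp] lemma mem_cubeAxes {i : Fin (m + 1)} : i ∈ cubeAxes m ↔ i ≠ Fin.last m := by
  simp [cubeAxes]

lemma card_cubeAxes : #(cubeAxes m) = m := by
  simp [cubeAxes, card_compl]

def blockSum (v : Fin (m + 1) → ℤ) : ℤ := ∑ i ∈ cubeAxes m, v i / 3

def IsPointCodeword {n : ℕ} (v : Fin n → ℤ) : Prop := ∀ i, v i % 3 = 2

def IsCubeCodeword (v : Fin (m + 1) → ℤ) : Prop :=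
  (∀ i ∈ cubeAxes m, v i % 3 < 2) ∧ v (Fin.last m) % 3 = blockSum v % 2

def code (m : ℕ) : Set (Fin (m + 1) → ℤ) := {v | IsCubeCodeword v ∨ IsPointCodeword v}

def cubeBase (v : Fin (m + 1) → ℤ) : Fin (m + 1) → ℤ :=
  fun i => if i ∈ cubeAxes m then 3 * (v i / 3) else v i

lemma IsCubeCodeword.emod_three_ne_two {v : Fin (m + 1) → ℤ} (hv : IsCubeCodeword v)
    (i : Fin (m + 1)) : v i % 3 ≠ 2 := by
  by_cases hi : i ∈ cubeAxes m
  · exact (hv.1 i hi).ne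
  · rw [mem_cubeAxes, not_not] at hi
    have := hv.2
    subst hi
    omega

lemma blockSum_congr {v w : Fin (m + 1) → ℤ} (h : ∀ i ∈ cubeAxes m, v i / 3 = w i / 3) :
    blockSum v = blockSum w :=
  sum_congr rfl h

lemma blockSum_update {v : Fin (m + 1) → ℤ} {j : Fin (m + 1)} (hj : j ∈ cubeAxes m) (c : ℤ) :
    blockSum (Function.update v j c) = blockSum v - v j / 3 + c / 3 := by
  unfold blockSum
  rw [← add_sum_erase _ _ hj, ← add_sum_erase _ _ hj, Function.update_self,
    sum_congr rfl fun i hi => by rw [Function.update_of_ne (ne_of_mem_erase hi)]]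
  ring

lemma cubeBase_congr {v w : Fin (m + 1) → ℤ} (h : ∀ i ∈ cubeAxes m, v i / 3 = w i / 3)
    (hlast : v (Fin.last m) = w (Fin.last m)) : cubeBase v = cubeBase w := by
  funext i
  unfold cubeBase
  split_ifs with hi
  · rw [h i hi]
  · rw [mem_cubeAxes, not_not] at hi
    rw [hi, hlast]

lemma mem_translateCube_cubeBase_iff {v x : Fin (m + 1) → ℤ} (hv : IsCubeCodeword v) :
    x ∈ translateCube (m + 1) (cubeAxes m) (cubeBase v) ↔
      IsCubeCodeword x ∧ cubeBase x = cubeBase v := by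
  rw [mem_translateCube_iff]
  constructor
  · intro h
    have hblock : ∀ i ∈ cubeAxes m, x i / 3 = v i / 3 ∧ x i % 3 < 2 := fun i hi => by
      have := h i
      simp only [cubeBase, if_pos hi] at this
      omega
    have hlast : x (Fin.last m) = v (Fin.last m) := by
      have := h (Fin.last m)
      simp only [cubeBase, mem_cubeAxes, ne_eq, not_true_eq_false, if_false] at this
      omega
    have hsum := blockSum_congr fun i hi => (hblock i hi).1
    refine ⟨⟨fun i hi => (hblock i hi).2, ?_⟩, cubeBase_congr (fun i hi => (hblock i hi).1) hlast⟩
    rw [hlast, hsum]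
    exact hv.2
  · rintro ⟨hx, hbase⟩ i
    rw [← hbase]
    unfold cubeBase
    split_ifs with hi
    · have := hx.1 i hi
      omega
    · omega

lemma IsPointCodeword.not_adj (hm : 1 ≤ m) {q y : Fin (m + 1) → ℤ} (hq : IsPointCodeword q)
    (hy : y ∈ code m) : ¬ (gridGraph (m + 1)).Adj q y := by
  rw [gridGraph_adj_iff]
  rintro ⟨k, hk, hrest⟩
  rcases hy with hy | hy
  · have : Nontrivial (Fin (m + 1)) := Fin.nontrivial_iff_two_le.mpr (by omega)
    obtain ⟨i, hik⟩ := exists_ne k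
    exact hy.emod_three_ne_two i (hrest i hik ▸ hq i)
  · have := hq k
    have := hy k
    rw [abs_eq (by norm_num)] at hk
    omega

lemma IsCubeCodeword.cubeBase_eq_of_adj {x y : Fin (m + 1) → ℤ} (hx : IsCubeCodeword x)
    (hy : IsCubeCodeword y) (h : (gridGraph (m + 1)).Adj x y) : cubeBase x = cubeBase y := by
  obtain ⟨k, hk, hrest⟩ := gridGraph_adj_iff.mp h
  rw [abs_eq (by norm_num)] at hk
  by_cases hkA : k ∈ cubeAxes m
  · have := hx.1 k hkA
    have := hy.1 k hkA
    refine cubeBase_congr (fun i _ => ?_) (hrest _ (mem_cubeAxes.mp hkA).symm)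
    rcases eq_or_ne i k with rfl | hik
    · omega
    · rw [hrest i hik]
  · rw [mem_cubeAxes, not_not] at hkA
    subst hkA
    have hsum : blockSum x = blockSum y :=
      blockSum_congr fun i hi => by rw [hrest i (by simpa using hi)]
    have := hx.2
    have := hy.2
    omega

end Code

section Components

variable {m : ℕ}

abbrev CodeComponent (m : ℕ) := ((gridGraph (m + 1)).induce (code m)).ConnectedComponent

lemma eq_of_mem_compVerts {n : ℕ} {S : Set (Fin n → ℤ)}
    {H H' : ((gridGraph n).induce S).ConnectedComponent} {v : Fin n → ℤ}
    (h : v ∈ compVerts n S H) (h' : v ∈ compVerts n S H') : H = H' := by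
  obtain ⟨_, rfl⟩ := h
  obtain ⟨_, rfl⟩ := h'
  rfl

lemma compVerts_code_of_isPointCodeword (hm : 1 ≤ m) {H : CodeComponent m}
    {q : Fin (m + 1) → ℤ} (hq : IsPointCodeword q) (hqH : q ∈ compVerts (m + 1) (code m) H) :
    compVerts (m + 1) (code m) H = {q} :=
  SimpleGraph.induce_component_eq hqH rfl (Set.singleton_subset_iff.mpr (Or.inr hq))
    (fun _ hx y hy hadj => absurd (hx ▸ hadj) (hq.not_adj hm hy))
    (fun _ _ hx hy => by subst hx hy; rfl)

lemma compVerts_code_of_isCubeCodeword (hm : 1 ≤ m) {H : CodeComponent m}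
    {x : Fin (m + 1) → ℤ} (hx : IsCubeCodeword x) (hxH : x ∈ compVerts (m + 1) (code m) H) :
    compVerts (m + 1) (code m) H = translateCube (m + 1) (cubeAxes m) (cubeBase x) := by
  have hsub : translateCube (m + 1) (cubeAxes m) (cubeBase x) ⊆ code m :=
    fun y hy => Or.inl ((mem_translateCube_cubeBase_iff hx).mp hy).1
  refine SimpleGraph.induce_component_eq hxH
    ((mem_translateCube_cubeBase_iff hx).mpr ⟨hx, rfl⟩) hsub (fun a ha b hb hadj => ?_)
    (fun _ _ ha hb => translateCube_reachable hsub ha hb)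
  obtain ⟨ha, hbase⟩ := (mem_translateCube_cubeBase_iff hx).mp ha
  rcases hb with hb | hb
  · exact (mem_translateCube_cubeBase_iff hx).mpr ⟨hb, (ha.cubeBase_eq_of_adj hb hadj) ▸ hbase⟩
  · exact absurd hadj.symm (hb.not_adj hm (Or.inl ha))

lemma compVerts_code_cases (hm : 1 ≤ m) (H : CodeComponent m) :
    (∃ w, compVerts (m + 1) (code m) H = translateCube (m + 1) (cubeAxes m) w) ∨
      ∃ v, compVerts (m + 1) (code m) H = {v} := by
  obtain ⟨⟨v, hv⟩, rfl⟩ := H.exists_rep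
  have hvH : v ∈ compVerts (m + 1) (code m) _ := ⟨hv, rfl⟩
  rcases hv with hc | hp
  · exact Or.inl ⟨_, compVerts_code_of_isCubeCodeword hm hc hvH⟩
  · exact Or.inr ⟨_, compVerts_code_of_isPointCodeword hm hp hvH⟩

end Components

section Decoding

def twoCount {n : ℕ} (u : Fin n → ℤ) : ℕ := #{i | u i % 3 = 2}

-- the value `≡ 2 (mod 3)` among `u i - 1`, `u i`, `u i + 1`
def nearestPoint {n : ℕ} (u : Fin n → ℤ) : Fin n → ℤ := fun i => 3 * ((u i - 1) / 3) + 2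

variable {n m : ℕ}

lemma isPointCodeword_nearestPoint (u : Fin n → ℤ) : IsPointCodeword (nearestPoint u) :=
  fun i => by
    simp only [nearestPoint]
    omega

lemma eq_nearestPoint {u q : Fin n → ℤ} (hq : IsPointCodeword q) (h : ∀ i, |u i - q i| ≤ 1) :
    q = nearestPoint u :=
  funext fun i => by
    have := hq i
    have := abs_le.mp (h i)
    simp only [nearestPoint]
    omega

lemma card_not_two_add_twoCount (u : Fin n → ℤ) : #{i | ¬ u i % 3 = 2} + twoCount u = n := by
  rw [twoCount, add_comm, card_filter_add_card_filter_not, card_univ, Fintype.card_fin]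

lemma trho_nearestPoint (u : Fin n → ℤ) : trho n u (nearestPoint u) = n - twoCount u := by
  have hbox : ∀ i, |u i - nearestPoint u i| ≤ 1 := fun i => by
    simp only [nearestPoint]
    rw [abs_le]
    omega
  have hcard : #{i | u i ≠ nearestPoint u i} = #{i | ¬ u i % 3 = 2} := by
    congr 1
    exact filter_congr fun i _ => by simp only [nearestPoint]; omega
  rw [trho, if_pos hbox, hcard]
  have := card_not_two_add_twoCount u
  omega

lemma sub_twoCount_le_trho {u q : Fin n → ℤ} (hq : IsPointCodeword q) :
    n - twoCount u ≤ trho n u q := by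
  have hcard : #{i | ¬ u i % 3 = 2} = #{i | u i % 3 ≠ q i % 3} := by
    congr 1
    exact filter_congr fun i _ => by rw [hq i]
  have := card_not_two_add_twoCount u
  have := card_emod_ne_le_trho 3 u q
  omega

lemma twoCount_le_trho {u x : Fin (m + 1) → ℤ} (hx : IsCubeCodeword x) :
    twoCount u ≤ trho (m + 1) u x := by
  refine (card_le_card fun i hi => ?_).trans (card_emod_ne_le_trho 3 u x)
  simp only [mem_filter, mem_univ, true_and] at hi ⊢
  rw [hi]
  exact (hx.emod_three_ne_two i).symm

/-- If a cube axis `j` has residue `2`, it must be moved into one of the two neighbouring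
blocks, and the parity of the block sum decides which; otherwise only the last coordinate
moves, to the adjacent value with the prescribed residue. -/
lemma exists_isCubeCodeword_trho_le_one {u : Fin (m + 1) → ℤ} (hu : twoCount u ≤ 1) :
    ∃ x, IsCubeCodeword x ∧ trho (m + 1) u x ≤ 1 := by
  by_cases hA : ∃ j ∈ cubeAxes m, u j % 3 = 2
  · obtain ⟨j, hj, hj2⟩ := hA
    have hother : ∀ i, i ≠ j → u i % 3 ≠ 2 := fun i hij hi2 =>
      hij (card_le_one.mp hu i (by simpa using hi2) j (by simpa using hj2))
    have hlast := hother _ (mem_cubeAxes.mp hj).symm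
    set c := if blockSum u % 2 = u (Fin.last m) % 3 then u j - 1 else u j + 1
    refine ⟨Function.update u j c, ⟨fun i hi => ?_, ?_⟩, trho_update_le_one ?_⟩
    · rcases eq_or_ne i j with rfl | hij
      · simp only [Function.update_self, c]
        split_ifs <;> omega
      · have := hother i hij
        rw [Function.update_of_ne hij]
        omega
    · rw [blockSum_update hj, Function.update_of_ne (mem_cubeAxes.mp hj).symm]
      simp only [c]
      split_ifs <;> omega
    · simp only [c]
      split_ifs <;> simp
  · push Not at hA
    set c := u (Fin.last m) - ((u (Fin.last m) - blockSum u % 2 + 1) % 3 - 1)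
    refine ⟨Function.update u (Fin.last m) c, ⟨fun i hi => ?_, ?_⟩, trho_update_le_one ?_⟩
    · have := hA i hi
      rw [Function.update_of_ne (mem_cubeAxes.mp hi)]
      omega
    · rw [blockSum_congr (w := u) fun i hi => by rw [Function.update_of_ne (mem_cubeAxes.mp hi)],
        Function.update_self]
      omega
    · rw [abs_le]
      omega

lemma IsCubeCodeword.eq_of_trho_le_one_of_emod_eq_two {u x y : Fin (m + 1) → ℤ} {j : Fin (m + 1)}
    (hj : j ∈ cubeAxes m) (hj2 : u j % 3 = 2) (hx : IsCubeCodeword x) (hy : IsCubeCodeword y)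
    (hux : trho (m + 1) u x ≤ 1) (huy : trho (m + 1) u y ≤ 1) : x = y := by
  have hagree : ∀ z, IsCubeCodeword z → trho (m + 1) u z ≤ 1 → ∀ i, i ≠ j → z i = u i :=
    fun z hz huz i hij =>
      (eq_of_trho_le_one huz (fun h => hz.emod_three_ne_two j (h ▸ hj2)) hij).symm
  have hsum : ∀ z, IsCubeCodeword z → trho (m + 1) u z ≤ 1 →
      blockSum z = blockSum u - u j / 3 + z j / 3 := fun z hz huz => by
    rw [← blockSum_update hj]
    congr 1
    funext i
    rcases eq_or_ne i j with rfl | hij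
    · simp
    · simp [hij, hagree z hz huz i hij]
  have hlast := (mem_cubeAxes.mp hj).symm
  have hpx := hx.2
  have hpy := hy.2
  rw [hagree x hx hux _ hlast, hsum x hx hux] at hpx
  rw [hagree y hy huy _ hlast, hsum y hy huy] at hpy
  funext i
  rcases eq_or_ne i j with rfl | hij
  · have := abs_le.mp (abs_sub_le_one_of_trho_le (hux.trans (by omega)) i)
    have := abs_le.mp (abs_sub_le_one_of_trho_le (huy.trans (by omega)) i)
    have := hx.emod_three_ne_two i
    have := hy.emod_three_ne_two i
    omega
  · rw [hagree x hx hux i hij, hagree y hy huy i hij]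

lemma cubeBase_eq_of_trho_le_one {u x y : Fin (m + 1) → ℤ} (hx : IsCubeCodeword x)
    (hy : IsCubeCodeword y) (hux : trho (m + 1) u x ≤ 1) (huy : trho (m + 1) u y ≤ 1) :
    cubeBase x = cubeBase y := by
  by_cases hA : ∃ j ∈ cubeAxes m, u j % 3 = 2
  · obtain ⟨j, hj, hj2⟩ := hA
    rw [hx.eq_of_trho_le_one_of_emod_eq_two hj hj2 hy hux huy]
  · push Not at hA
    have hbx := abs_sub_le_one_of_trho_le (hux.trans (by omega))
    have hby := abs_sub_le_one_of_trho_le (huy.trans (by omega))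
    have hblock : ∀ z, IsCubeCodeword z → (∀ i, |u i - z i| ≤ 1) →
        ∀ i ∈ cubeAxes m, z i / 3 = u i / 3 := fun z hz hb i hi => by
      have := hz.1 i hi
      have := hA i hi
      have := abs_le.mp (hb i)
      omega
    have hsum : blockSum x = blockSum y :=
      (blockSum_congr (hblock x hx hbx)).trans (blockSum_congr (hblock y hy hby)).symm
    refine cubeBase_congr (fun i hi => (hblock x hx hbx i hi).trans (hblock y hy hby i hi).symm) ?_
    have := hx.2
    have := hy.2
    have := abs_le.mp (hbx (Fin.last m))
    have := abs_le.mp (hby (Fin.last m))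
    omega

end Decoding

section Balls

variable {m : ℕ}

lemma cubeAxes_nonempty (hm : 1 ≤ m) : (cubeAxes m).Nonempty :=
  card_pos.mp (card_cubeAxes.trans_gt hm)

lemma cubeBall_iff (hm : 1 ≤ m) (u : Fin (m + 1) → ℤ) (H : CodeComponent m) :
    ((∃ w, compVerts (m + 1) (code m) H = translateCube (m + 1) (cubeAxes m) w) ∧
        trhoSet (m + 1) u (compVerts (m + 1) (code m) H) ≤ 1) ↔
      ∃ x ∈ compVerts (m + 1) (code m) H, IsCubeCodeword x ∧ trho (m + 1) u x ≤ 1 := by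
  constructor
  · rintro ⟨⟨w, hw⟩, hle⟩
    obtain ⟨x, hxH, hxd⟩ :=
      exists_trho_eq_trhoSet_s3 u (hw ▸ ⟨w, self_mem_translateCube⟩ : (compVerts _ _ H).Nonempty)
    rcases hxH.1 with hx | hx
    · exact ⟨x, hxH, hx, hxd ▸ hle⟩
    · exact absurd (hw.symm.trans (compVerts_code_of_isPointCodeword hm hx hxH))
        (translateCube_ne_singleton (cubeAxes_nonempty hm) x)
  · rintro ⟨x, hxH, hx, hux⟩
    exact ⟨⟨_, compVerts_code_of_isCubeCodeword hm hx hxH⟩, (trhoSet_le_s3 hxH).trans hux⟩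

lemma pointBall_iff (hm : 1 ≤ m) (u : Fin (m + 1) → ℤ) (H : CodeComponent m) :
    ((∃ v, compVerts (m + 1) (code m) H = {v}) ∧
        trhoSet (m + 1) u (compVerts (m + 1) (code m) H) ≤ m - 1) ↔
      2 ≤ twoCount u ∧ nearestPoint u ∈ compVerts (m + 1) (code m) H := by
  constructor
  · rintro ⟨⟨v, hv⟩, hle⟩
    have hvH : v ∈ compVerts (m + 1) (code m) H := hv ▸ rfl
    rw [hv, trhoSet_singleton] at hle
    rcases hvH.1 with hc | hp
    · exact absurd (hv.symm.trans (compVerts_code_of_isCubeCodeword hm hc hvH))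
        (translateCube_ne_singleton (cubeAxes_nonempty hm) v).symm
    · have := sub_twoCount_le_trho (u := u) hp
      refine ⟨by omega, ?_⟩
      rwa [← eq_nearestPoint hp (abs_sub_le_one_of_trho_le (by omega))]
  · rintro ⟨h2, hH⟩
    have hH' := compVerts_code_of_isPointCodeword hm (isPointCodeword_nearestPoint u) hH
    refine ⟨⟨_, hH'⟩, ?_⟩
    rw [hH', trhoSet_singleton, trho_nearestPoint]
    omega

lemma existsUnique_component_ball (hm : 1 ≤ m) (u : Fin (m + 1) → ℤ) :
    ∃! H : CodeComponent m,
      (∃ x ∈ compVerts (m + 1) (code m) H, IsCubeCodeword x ∧ trho (m + 1) u x ≤ 1) ∨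
        (2 ≤ twoCount u ∧ nearestPoint u ∈ compVerts (m + 1) (code m) H) := by
  by_cases h2 : 2 ≤ twoCount u
  · have hq := isPointCodeword_nearestPoint u
    refine ⟨_, Or.inr ⟨h2, Or.inr hq, rfl⟩, ?_⟩
    rintro H (⟨x, -, hx, hux⟩ | ⟨-, hH⟩)
    · have := twoCount_le_trho (u := u) hx
      omega
    · exact eq_of_mem_compVerts hH ⟨Or.inr hq, rfl⟩
  · obtain ⟨x₀, hx₀, hux₀⟩ := exists_isCubeCodeword_trho_le_one (u := u) (by omega)
    have hx₀H : x₀ ∈ compVerts (m + 1) (code m) _ := ⟨Or.inl hx₀, rfl⟩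
    refine ⟨_, Or.inl ⟨x₀, hx₀H, hx₀, hux₀⟩, ?_⟩
    rintro H (⟨x, hxH, hx, hux⟩ | ⟨h2', -⟩)
    · refine eq_of_mem_compVerts hxH ?_
      rw [compVerts_code_of_isCubeCodeword hm hx₀ hx₀H, mem_translateCube_cubeBase_iff hx₀]
      exact ⟨hx, cubeBase_eq_of_trho_le_one hx hx₀ hux hux₀⟩
    · exact absurd h2' h2

end Balls

lemma mem_code_of_emod_six_eq {m : ℕ} {v w : Fin (m + 1) → ℤ} (hv : v ∈ code m)
    (h : ∀ i, v i % 6 = w i % 6) : w ∈ code m := by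
  have h3 : ∀ i, v i % 3 = w i % 3 := fun i => by have := h i; omega
  rcases hv with hv | hv
  · have hsum : blockSum v % 2 = blockSum w % 2 := by
      unfold blockSum
      rw [sum_int_mod, sum_int_mod _ _ fun i => w i / 3]
      exact congrArg (· % 2) (sum_congr rfl fun i _ => by have := h i; omega)
    exact Or.inl ⟨fun i hi => h3 i ▸ hv.1 i hi, h3 _ ▸ hsum ▸ hv.2⟩
  · exact Or.inr fun i => h3 i ▸ hv i

lemma mem_code_iff_add_smul_single {m : ℕ} (i : Fin (m + 1)) (v : Fin (m + 1) → ℤ) :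
    v ∈ code m ↔ v + (6 : ℤ) • Pi.single i 1 ∈ code m := by
  have h6 : ∀ j, (v + (6 : ℤ) • Pi.single i 1 : Fin (m + 1) → ℤ) j % 6 = v j % 6 := fun j => by
    rcases eq_or_ne j i with rfl | hj <;> simp [*]
  exact ⟨fun h => mem_code_of_emod_six_eq h fun j => (h6 j).symm,
    fun h => mem_code_of_emod_six_eq h h6⟩

/-- For `n ≥ 3` there is a periodic set `S ⊆ ℤ^n` whose induced
components are translates of a fixed binary `(n−1)`-cube and single vertices (both kinds
occurring), such that the truncated spheres of radius `1` around the cube components and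
of radius `n−2` around the singleton components partition `ℤ^n`, with unique nearest
central vertex. -/
theorem stmt_3 (n : ℕ) (hn : 3 ≤ n) :
    ∃ (S : Set (Fin n → ℤ)) (A : Finset (Fin n)), A.card = n - 1 ∧
      (∀ H : ((gridGraph n).induce S).ConnectedComponent,
        (∃ w : Fin n → ℤ, compVerts n S H = translateCube n A w) ∨
        (∃ v : Fin n → ℤ, compVerts n S H = {v})) ∧
      (∃ H : ((gridGraph n).induce S).ConnectedComponent, ∃ w : Fin n → ℤ,
        compVerts n S H = translateCube n A w) ∧
      (∃ H : ((gridGraph n).induce S).ConnectedComponent, ∃ v : Fin n → ℤ,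
        compVerts n S H = {v}) ∧
      (∀ u : Fin n → ℤ, ∃! H : ((gridGraph n).induce S).ConnectedComponent,
        ((∃ w : Fin n → ℤ, compVerts n S H = translateCube n A w) ∧
          trhoSet n u (compVerts n S H) ≤ 1) ∨
        ((∃ v : Fin n → ℤ, compVerts n S H = {v}) ∧
          trhoSet n u (compVerts n S H) ≤ n - 2)) ∧
      (∀ u : Fin n → ℤ, ∀ H : ((gridGraph n).induce S).ConnectedComponent,
        (((∃ w : Fin n → ℤ, compVerts n S H = translateCube n A w) ∧
            trhoSet n u (compVerts n S H) ≤ 1) ∨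
          ((∃ v : Fin n → ℤ, compVerts n S H = {v}) ∧
            trhoSet n u (compVerts n S H) ≤ n - 2)) →
        ∃! w, w ∈ compVerts n S H ∧ trho n u w = trhoSet n u (compVerts n S H)) ∧
      (∃ p : Fin n → ℕ, (∀ i, 1 ≤ p i) ∧
        ∀ i : Fin n, ∀ v : Fin n → ℤ,
          v ∈ S ↔ v + (p i : ℤ) • Pi.single i (1 : ℤ) ∈ S) := by
  obtain ⟨m, rfl⟩ : ∃ m, n = m + 1 := ⟨n - 1, by omega⟩
  have hm : 1 ≤ m := by omega
  have hzero : IsCubeCodeword (0 : Fin (m + 1) → ℤ) := ⟨fun _ _ => by simp, by simp [blockSum]⟩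
  have htwo : IsPointCodeword (fun _ => 2 : Fin (m + 1) → ℤ) := fun _ => rfl
  refine ⟨code m, cubeAxes m, by rw [card_cubeAxes, Nat.add_sub_cancel], compVerts_code_cases hm,
    ⟨_, _, compVerts_code_of_isCubeCodeword hm hzero ⟨Or.inl hzero, rfl⟩⟩,
    ⟨_, _, compVerts_code_of_isPointCodeword hm htwo ⟨Or.inr htwo, rfl⟩⟩,
    fun u => ?_, fun u H hH => ?_, fun _ => 6, fun _ => by norm_num,
    fun i v => by exact_mod_cast mem_code_iff_add_smul_single i v⟩
  · simpa only [cubeBall_iff hm, pointBall_iff hm, show m + 1 - 2 = m - 1 by omega]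
      using existsUnique_component_ball hm u
  · rcases hH with ⟨⟨w, hw⟩, hle⟩ | ⟨⟨v, hv⟩, -⟩
    · rw [hw] at hle ⊢
      exact existsUnique_nearest_translateCube hle
    · rw [hv, trhoSet_singleton]
      exact ⟨v, ⟨rfl, rfl⟩, fun w hw => hw.1⟩
end

section
/- Let n ≥ 1 and let c_1,…,c_n ≥ 2 and k_1,…,k_n ≥ 1 be integers, and set m_i = (c_i+1)k_i. Then the toroidal grid C_{m_1}□⋯□C_{m_n} contains an n-PTMC S with respect to the torus truncated distance, such that each connected component of the subgraph induced by S is the image under coordinatewise reduction of a translate of the box Π_{i=1}^n {0,…,c_i−2} in ℤ^n (a cartesian product over i of paths with c_i−1 vertices). -/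
/-!
Cut every cycle `ℤ/m_iℤ` into blocks of `c_i + 1` consecutive vertices and keep, in each block,
the first `c_i - 1` of them; the code is the product of the kept sets. Each of the two dropped
positions of a block is adjacent to exactly one kept position (the last kept one of its block,
resp. the first one of the next block), so every vertex `u` has a unique nearest codeword, at
truncated distance the number of dropped coordinates of `u`. Two codewords are connected in the
code iff they lie in the same product of blocks, and a codeword within truncated distance `n`
of `u` lies in the product of the blocks of `u + (1, …, 1)`, which singles out one component.
-/

/-- The toroidal grid `C_{m 0} □ ⋯ □ C_{m (n-1)}`: two vertices are adjacent iff they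
differ in exactly one coordinate, by `±1` there. -/
def torusGraph (n : ℕ) (m : Fin n → ℕ) : SimpleGraph (Π i, ZMod (m i)) where
  Adj u v := u ≠ v ∧ ∃ i, (v i = u i + 1 ∨ v i = u i - 1) ∧ ∀ j, j ≠ i → u j = v j
  symm := by
    constructor
    rintro u v ⟨hne, i, hi, hj⟩
    refine ⟨hne.symm, i, ?_, fun j hj' => (hj j hj').symm⟩
    rcases hi with h | h
    · right; rw [h]; ring
    · left; rw [h]; ring
  loopless := by
    constructor
    rintro u ⟨hne, -⟩
    exact hne rfl

/-- The torus truncated distance (valued in `ℕ`). -/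
def ttrho (n : ℕ) (m : Fin n → ℕ) (u v : Π i, ZMod (m i)) : ℕ :=
  if ∀ i, u i = v i ∨ u i - v i = 1 ∨ u i - v i = -1 then
    (Finset.univ.filter fun i => u i ≠ v i).card
  else n + 1

/-- Torus truncated distance from a point to a set. -/
noncomputable def ttrhoSet (n : ℕ) (m : Fin n → ℕ) (u : Π i, ZMod (m i))
    (S : Set (Π i, ZMod (m i))) : ℕ :=
  sInf {d | ∃ s ∈ S, ttrho n m u s = d}

/-- The vertex set of a connected component `H` of the subgraph of the toroidal grid
induced by `S`. -/
def tCompVerts (n : ℕ) (m : Fin n → ℕ) (S : Set (Π i, ZMod (m i)))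
    (H : ((torusGraph n m).induce S).ConnectedComponent) : Set (Π i, ZMod (m i)) :=
  {v | ∃ h : v ∈ S, ((torusGraph n m).induce S).connectedComponentMk ⟨v, h⟩ = H}

/-- `S` is a `t`-perfect truncated-metric code in the toroidal grid. -/
def IsTorusPTMC (n : ℕ) (m : Fin n → ℕ) (t : ℕ) (S : Set (Π i, ZMod (m i))) : Prop :=
  (∀ u : Π i, ZMod (m i), ∃! s, s ∈ S ∧ ttrho n m u s = ttrhoSet n m u S) ∧
  (∀ u : Π i, ZMod (m i), ∃! H : ((torusGraph n m).induce S).ConnectedComponent,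
    ttrhoSet n m u (tCompVerts n m S H) ≤ t)

namespace TorusCode

section Cycle

variable {N c : ℕ}

def offset (c : ℕ) (x : ZMod N) : ℕ := (ZMod.cast x : ZMod (c + 1)).val

def blockStart (c : ℕ) (x : ZMod N) : ZMod N := x - (offset c x : ZMod N)

def IsCode (c : ℕ) (x : ZMod N) : Prop := offset c x + 2 ≤ c

instance (c : ℕ) : DecidablePred (IsCode c : ZMod N → Prop) := fun _ => Nat.decLe _ _

def nearestCode (c : ℕ) (x : ZMod N) : ZMod N :=
  if offset c x = c then x + 1 else if offset c x + 1 = c then x - 1 else x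

lemma offset_lt (x : ZMod N) : offset c x < c + 1 := ZMod.val_lt _

lemma offset_add_natCast (hdvd : c + 1 ∣ N) (x : ZMod N) (j : ℕ) :
    offset c (x + (j : ZMod N)) = (offset c x + j) % (c + 1) := by
  unfold offset
  rw [← ZMod.castHom_apply (h := hdvd), map_add, map_natCast, ZMod.castHom_apply,
    ZMod.val_add, ZMod.val_natCast, Nat.add_mod_mod]

lemma offset_add_one (hdvd : c + 1 ∣ N) (x : ZMod N) :
    offset c (x + 1) = if offset c x = c then 0 else offset c x + 1 := by
  have h := offset_add_natCast hdvd x 1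
  rw [Nat.cast_one] at h
  have := offset_lt (c := c) x
  split_ifs with hx
  · rw [h, hx, Nat.mod_self]
  · rw [h, Nat.mod_eq_of_lt (by omega)]

lemma offset_sub_one (hdvd : c + 1 ∣ N) (x : ZMod N) :
    offset c (x - 1) = if offset c x = 0 then c else offset c x - 1 := by
  have h := offset_add_one hdvd (x - 1)
  rw [sub_add_cancel] at h
  have := offset_lt (c := c) (x - 1)
  split_ifs at h ⊢ <;> omega

lemma blockStart_add_one (hdvd : c + 1 ∣ N) {x : ZMod N} (hx : offset c x ≠ c) :
    blockStart c (x + 1) = blockStart c x := by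
  unfold blockStart
  rw [offset_add_one hdvd, if_neg hx]
  push_cast
  ring

lemma blockStart_sub_one (hdvd : c + 1 ∣ N) {x : ZMod N} (hx : offset c x ≠ 0) :
    blockStart c (x - 1) = blockStart c x := by
  conv_rhs => rw [← sub_add_cancel x 1]
  refine (blockStart_add_one hdvd ?_).symm
  have := offset_lt (c := c) x
  rw [offset_sub_one hdvd, if_neg hx]
  omega

lemma isCode_sub_one (hdvd : c + 1 ∣ N) {x : ZMod N} (hx : IsCode c x) (h₀ : offset c x ≠ 0) :
    IsCode c (x - 1) := by
  unfold IsCode at hx ⊢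
  rw [offset_sub_one hdvd, if_neg h₀]
  omega

lemma offset_blockStart (hdvd : c + 1 ∣ N) (x : ZMod N) : offset c (blockStart c x) = 0 := by
  unfold blockStart offset
  rw [← ZMod.castHom_apply (h := hdvd), map_sub, map_natCast, ZMod.castHom_apply,
    ZMod.natCast_zmod_val, sub_self, ZMod.val_zero]

lemma blockStart_eq_self {x : ZMod N} (hx : offset c x = 0) : blockStart c x = x := by
  rw [blockStart, hx, Nat.cast_zero, sub_zero]

lemma isCode_blockStart (hdvd : c + 1 ∣ N) (hc : 2 ≤ c) (x : ZMod N) :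
    IsCode c (blockStart c x) := by
  rw [IsCode, offset_blockStart hdvd]
  omega

lemma isCode_nearestCode (hdvd : c + 1 ∣ N) (hc : 2 ≤ c) (x : ZMod N) :
    IsCode c (nearestCode c x) := by
  unfold nearestCode IsCode
  have := offset_lt (c := c) x
  split_ifs with h₁ h₂
  · rw [offset_add_one hdvd, if_pos h₁]
    omega
  · rw [offset_sub_one hdvd, if_neg (by omega)]
    omega
  · omega

lemma nearestCode_close (x : ZMod N) :
    x = nearestCode c x ∨ x - nearestCode c x = 1 ∨ x - nearestCode c x = -1 := by
  unfold nearestCode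
  split_ifs
  · exact Or.inr (Or.inr (by ring))
  · exact Or.inr (Or.inl (by ring))
  · exact Or.inl rfl

lemma nearestCode_of_isCode {x : ZMod N} (hx : IsCode c x) : nearestCode c x = x := by
  unfold IsCode at hx
  rw [nearestCode, if_neg (by omega), if_neg (by omega)]

lemma nearestCode_eq_self_iff (hdvd : c + 1 ∣ N) (hc : 2 ≤ c) (x : ZMod N) :
    nearestCode c x = x ↔ IsCode c x := by
  unfold nearestCode IsCode
  have := offset_lt (c := c) x
  split_ifs with h₁ h₂
  · refine iff_of_false (fun h => ?_) (by omega)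
    have h' := congrArg (offset c) h
    rw [offset_add_one hdvd, if_pos h₁] at h'
    omega
  · refine iff_of_false (fun h => ?_) (by omega)
    have h' := congrArg (offset c) h
    rw [offset_sub_one hdvd, if_neg (by omega)] at h'
    omega
  · exact iff_of_true rfl (by omega)

lemma eq_nearestCode_of_close (hdvd : c + 1 ∣ N) {x s : ZMod N} (hs : IsCode c s)
    (hx : ¬ IsCode c x) (h : x = s ∨ x = s + 1 ∨ x = s - 1) : s = nearestCode c x := by
  unfold IsCode at hs hx
  have := offset_lt (c := c) s
  rcases h with rfl | rfl | rfl
  · exact absurd hs hx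
  · have ho : offset c (s + 1) = offset c s + 1 := by
      rw [offset_add_one hdvd, if_neg (by omega)]
    rw [ho] at hx
    rw [nearestCode, ho, if_neg (by omega), if_pos (by omega), add_sub_cancel_right]
  · rw [offset_sub_one hdvd] at hx
    split_ifs at hx with h₀
    · rw [nearestCode, offset_sub_one hdvd, if_pos h₀, if_pos rfl, sub_add_cancel]
    · omega

lemma blockStart_add_one_of_close (hdvd : c + 1 ∣ N) {x s : ZMod N} (hs : IsCode c s)
    (h : x = s ∨ x = s + 1 ∨ x = s - 1) : blockStart c (x + 1) = blockStart c s := by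
  unfold IsCode at hs
  rcases h with rfl | rfl | rfl
  · exact blockStart_add_one hdvd (by omega)
  · rw [blockStart_add_one hdvd (by rw [offset_add_one hdvd]; split_ifs <;> omega),
      blockStart_add_one hdvd (by omega)]
  · rw [sub_add_cancel]

lemma blockStart_eq_of_adj (hdvd : c + 1 ∣ N) {x y : ZMod N} (hx : IsCode c x)
    (hy : IsCode c y) (h : y = x + 1 ∨ y = x - 1) : blockStart c y = blockStart c x := by
  unfold IsCode at hx hy
  rcases h with rfl | rfl
  · exact blockStart_add_one hdvd (by omega)
  · conv_rhs => rw [← sub_add_cancel x 1]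
    exact (blockStart_add_one hdvd (by omega)).symm

lemma isCode_and_blockStart_eq_iff (hdvd : c + 1 ∣ N) {w : ℤ} (hw : offset c (w : ZMod N) = 0)
    (x : ZMod N) :
    IsCode c x ∧ blockStart c x = w ↔
      ∃ v : ℤ, (w ≤ v ∧ v ≤ w + c - 2) ∧ (v : ZMod N) = x := by
  constructor
  · rintro ⟨hx, hxw⟩
    unfold IsCode at hx
    refine ⟨w + offset c x, ⟨by omega, by omega⟩, ?_⟩
    rw [Int.cast_add, ← hxw, blockStart, Int.cast_natCast, sub_add_cancel]
  · rintro ⟨v, ⟨hwv, hvw⟩, rfl⟩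
    obtain ⟨j, rfl⟩ : ∃ j : ℕ, v = w + j := ⟨(v - w).toNat, by omega⟩
    have hj : offset c ((w : ZMod N) + (j : ZMod N)) = j := by
      rw [offset_add_natCast hdvd, hw, zero_add, Nat.mod_eq_of_lt (by omega)]
    push_cast
    refine ⟨by rw [IsCode, hj]; omega, ?_⟩
    rw [blockStart, hj, add_sub_cancel_right]

end Cycle

lemma eq_or_eq_add_one_or_eq_sub_one {R : Type*} [CommRing R] {x s : R}
    (h : x = s ∨ x - s = 1 ∨ x - s = -1) : x = s ∨ x = s + 1 ∨ x = s - 1 := by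
  rcases h with h | h | h
  · exact Or.inl h
  · exact Or.inr (Or.inl (by linear_combination h))
  · exact Or.inr (Or.inr (by linear_combination h))

section TruncatedDistance

variable {n : ℕ} {m : Fin n → ℕ} {u v : Π i, ZMod (m i)} {S : Set (Π i, ZMod (m i))}

lemma ttrho_eq_card (h : ∀ i, u i = v i ∨ u i - v i = 1 ∨ u i - v i = -1) :
    ttrho n m u v = (Finset.univ.filter fun i => u i ≠ v i).card :=
  if_pos h

lemma close_of_ttrho_le (h : ttrho n m u v ≤ n) (i : Fin n) :
    u i = v i ∨ u i - v i = 1 ∨ u i - v i = -1 := by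
  by_contra hi
  rw [ttrho, if_neg fun h' => hi (h' i)] at h
  omega

lemma ttrhoSet_le (hv : v ∈ S) : ttrhoSet n m u S ≤ ttrho n m u v :=
  Nat.sInf_le ⟨v, hv, rfl⟩

lemma exists_ttrho_eq_ttrhoSet (hS : S.Nonempty) : ∃ s ∈ S, ttrho n m u s = ttrhoSet n m u S :=
  Nat.sInf_mem (hS.image _)

lemma mem_tCompVerts_connectedComponentMk (hv : v ∈ S) :
    v ∈ tCompVerts n m S (((torusGraph n m).induce S).connectedComponentMk ⟨v, hv⟩) :=
  ⟨hv, rfl⟩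

end TruncatedDistance

section Code

variable {n : ℕ} {N c : Fin n → ℕ}

def codeSet (N c : Fin n → ℕ) : Set (Π i, ZMod (N i)) := {u | ∀ i, IsCode (c i) (u i)}

def nearestCodeword (c : Fin n → ℕ) (u : Π i, ZMod (N i)) : Π i, ZMod (N i) :=
  fun i => nearestCode (c i) (u i)

def blockStarts (c : Fin n → ℕ) (u : Π i, ZMod (N i)) : Π i, ZMod (N i) :=
  fun i => blockStart (c i) (u i)

def defect (c : Fin n → ℕ) (u : Π i, ZMod (N i)) : Finset (Fin n) :=
  Finset.univ.filter fun i => ¬ IsCode (c i) (u i)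

lemma nearestCodeword_mem (hc : ∀ i, 2 ≤ c i) (hdvd : ∀ i, c i + 1 ∣ N i)
    (u : Π i, ZMod (N i)) : nearestCodeword c u ∈ codeSet N c :=
  fun i => isCode_nearestCode (hdvd i) (hc i) (u i)

lemma ttrho_nearestCodeword (hc : ∀ i, 2 ≤ c i) (hdvd : ∀ i, c i + 1 ∣ N i)
    (u : Π i, ZMod (N i)) : ttrho n N u (nearestCodeword c u) = (defect c u).card := by
  rw [ttrho_eq_card (v := nearestCodeword c u) fun i => nearestCode_close (u i), defect]
  congr 1
  refine Finset.filter_congr fun i _ => ?_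
  rw [ne_comm, Ne, nearestCodeword, nearestCode_eq_self_iff (hdvd i) (hc i)]

lemma defect_subset {u s : Π i, ZMod (N i)} (hs : s ∈ codeSet N c) :
    defect c u ⊆ Finset.univ.filter fun i => u i ≠ s i := by
  intro i hi
  rw [defect, Finset.mem_filter] at hi
  exact Finset.mem_filter.mpr ⟨hi.1, fun h => hi.2 (h ▸ hs i)⟩

lemma card_defect_le (u : Π i, ZMod (N i)) : (defect c u).card ≤ n :=
  (defect c u).card_le_univ.trans_eq (Fintype.card_fin n)

lemma card_defect_le_ttrho {u s : Π i, ZMod (N i)} (hs : s ∈ codeSet N c) :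
    (defect c u).card ≤ ttrho n N u s := by
  by_cases h : ∀ i, u i = s i ∨ u i - s i = 1 ∨ u i - s i = -1
  · rw [ttrho_eq_card h]
    exact Finset.card_le_card (defect_subset hs)
  · rw [ttrho, if_neg h]
    exact (card_defect_le u).trans n.le_succ

lemma ttrhoSet_codeSet (hc : ∀ i, 2 ≤ c i) (hdvd : ∀ i, c i + 1 ∣ N i)
    (u : Π i, ZMod (N i)) : ttrhoSet n N u (codeSet N c) = (defect c u).card := by
  obtain ⟨s, hs, hs'⟩ :=
    exists_ttrho_eq_ttrhoSet (u := u) ⟨_, nearestCodeword_mem hc hdvd u⟩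
  refine le_antisymm ?_ (hs' ▸ card_defect_le_ttrho hs)
  exact ttrho_nearestCodeword hc hdvd u ▸ ttrhoSet_le (nearestCodeword_mem hc hdvd u)

lemma eq_nearestCodeword_of_ttrho_le (hdvd : ∀ i, c i + 1 ∣ N i) {u s : Π i, ZMod (N i)}
    (hs : s ∈ codeSet N c) (h : ttrho n N u s ≤ (defect c u).card) :
    s = nearestCodeword c u := by
  have hclose := close_of_ttrho_le (h.trans (card_defect_le u))
  rw [ttrho_eq_card hclose] at h
  have hdefect := Finset.eq_of_subset_of_card_le (defect_subset hs) h
  funext i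
  by_cases hu : IsCode (c i) (u i)
  · have hi : i ∉ defect c u := by simp [defect, hu]
    rw [hdefect, Finset.mem_filter, not_and, not_not] at hi
    rw [← hi (Finset.mem_univ i), nearestCodeword, nearestCode_of_isCode hu]
  · exact eq_nearestCode_of_close (hdvd i) (hs i) hu
      (eq_or_eq_add_one_or_eq_sub_one (hclose i))

lemma blockStarts_eq_of_reachable (hdvd : ∀ i, c i + 1 ∣ N i) {a b : codeSet N c}
    (h : ((torusGraph n N).induce (codeSet N c)).Reachable a b) :
    blockStarts c a.1 = blockStarts c b.1 := by
  obtain ⟨p⟩ := h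
  induction p with
  | nil => rfl
  | @cons x y z hadj _ ih =>
    rw [← ih]
    obtain ⟨-, i, hi, hj⟩ := hadj
    funext j
    by_cases hji : j = i
    · subst hji
      exact (blockStart_eq_of_adj (hdvd j) (x.2 j) (y.2 j) hi).symm
    · exact congrArg (blockStart (c j)) (hj j hji)

lemma reachable_blockStarts (hc : ∀ i, 2 ≤ c i) (hdvd : ∀ i, c i + 1 ∣ N i)
    {u : Π i, ZMod (N i)} (hu : u ∈ codeSet N c) :
    ((torusGraph n N).induce (codeSet N c)).Reachable
      ⟨blockStarts c u, fun i => isCode_blockStart (hdvd i) (hc i) (u i)⟩ ⟨u, hu⟩ := by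
  induction hd : ∑ i, offset (c i) (u i) using Nat.strong_induction_on generalizing u with
  | _ d ih =>
  by_cases h₀ : ∀ i, offset (c i) (u i) = 0
  · have hstart : blockStarts c u = u := funext fun i => blockStart_eq_self (h₀ i)
    convert SimpleGraph.Reachable.refl (⟨u, hu⟩ : codeSet N c)
    exact Subtype.ext hstart
  · obtain ⟨i, hi⟩ := not_forall.mp h₀
    set u' := Function.update u i (u i - 1)
    have hu' : u' ∈ codeSet N c := by
      intro j
      rcases eq_or_ne j i with rfl | hj
      · simpa [u'] using isCode_sub_one (hdvd j) (hu j) hi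
      · simpa [u', hj] using hu j
    have hstart : blockStarts c u' = blockStarts c u := by
      funext j
      rcases eq_or_ne j i with rfl | hj
      · simpa [u', blockStarts] using blockStart_sub_one (hdvd j) hi
      · simp [u', blockStarts, hj]
    have hlt : ∑ j, offset (c j) (u' j) < d := by
      rw [← hd]
      refine Finset.sum_lt_sum (fun j _ => ?_) ⟨i, Finset.mem_univ i, ?_⟩
      · rcases eq_or_ne j i with rfl | hj
        · simp [u', offset_sub_one (hdvd j), hi]
        · simp [u', hj]
      · simp only [u', Function.update_self, offset_sub_one (hdvd i), if_neg hi]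
        omega
    have hadj : (torusGraph n N).Adj u' u := by
      refine ⟨fun h => ?_, i, Or.inl (by simp [u']), fun j hj => by simp [u', hj]⟩
      have := congrArg (fun v => offset (c i) (v i)) h
      simp only [u', Function.update_self, offset_sub_one (hdvd i), if_neg hi] at this
      omega
    have hreach := ih _ hlt hu' rfl
    simp only [hstart] at hreach
    exact hreach.trans (SimpleGraph.Adj.reachable (G := (torusGraph n N).induce (codeSet N c))
      (u := ⟨u', hu'⟩) (v := ⟨u, hu⟩) hadj)

lemma reachable_iff_blockStarts_eq (hc : ∀ i, 2 ≤ c i) (hdvd : ∀ i, c i + 1 ∣ N i)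
    {u v : Π i, ZMod (N i)} (hu : u ∈ codeSet N c) (hv : v ∈ codeSet N c) :
    ((torusGraph n N).induce (codeSet N c)).Reachable ⟨u, hu⟩ ⟨v, hv⟩ ↔
      blockStarts c u = blockStarts c v := by
  refine ⟨blockStarts_eq_of_reachable hdvd, fun h => ?_⟩
  have hv' := reachable_blockStarts hc hdvd hv
  simp only [← h] at hv'
  exact (reachable_blockStarts hc hdvd hu).symm.trans hv'

lemma tCompVerts_codeSet (hc : ∀ i, 2 ≤ c i) (hdvd : ∀ i, c i + 1 ∣ N i)
    {w : Π i, ZMod (N i)} (hw : w ∈ codeSet N c) :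
    tCompVerts n N (codeSet N c)
        (((torusGraph n N).induce (codeSet N c)).connectedComponentMk ⟨w, hw⟩) =
      {v | v ∈ codeSet N c ∧ blockStarts c v = blockStarts c w} := by
  ext v
  constructor
  · rintro ⟨hv, hvw⟩
    exact ⟨hv, (reachable_iff_blockStarts_eq hc hdvd hv hw).mp
      (SimpleGraph.ConnectedComponent.eq.mp hvw)⟩
  · rintro ⟨hv, hvw⟩
    exact ⟨hv, SimpleGraph.ConnectedComponent.eq.mpr
      ((reachable_iff_blockStarts_eq hc hdvd hv hw).mpr hvw)⟩

lemma existsUnique_nearest_codeword (hc : ∀ i, 2 ≤ c i) (hdvd : ∀ i, c i + 1 ∣ N i)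
    (u : Π i, ZMod (N i)) :
    ∃! s, s ∈ codeSet N c ∧ ttrho n N u s = ttrhoSet n N u (codeSet N c) := by
  refine ⟨nearestCodeword c u, ⟨nearestCodeword_mem hc hdvd u, ?_⟩,
    fun s ⟨hs, hsu⟩ => ?_⟩
  · rw [ttrho_nearestCodeword hc hdvd, ttrhoSet_codeSet hc hdvd]
  · exact eq_nearestCodeword_of_ttrho_le hdvd hs (hsu.trans (ttrhoSet_codeSet hc hdvd u)).le

lemma existsUnique_component_near (hc : ∀ i, 2 ≤ c i) (hdvd : ∀ i, c i + 1 ∣ N i)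
    (u : Π i, ZMod (N i)) :
    ∃! H : ((torusGraph n N).induce (codeSet N c)).ConnectedComponent,
      ttrhoSet n N u (tCompVerts n N (codeSet N c) H) ≤ n := by
  have hmem := nearestCodeword_mem hc hdvd u
  refine ⟨((torusGraph n N).induce (codeSet N c)).connectedComponentMk ⟨_, hmem⟩, ?_,
    fun H hH => ?_⟩
  · calc _ ≤ ttrho n N u (nearestCodeword c u) :=
          ttrhoSet_le (mem_tCompVerts_connectedComponentMk hmem)
      _ = (defect c u).card := ttrho_nearestCodeword hc hdvd u
      _ ≤ n := card_defect_le u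
  induction H using SimpleGraph.ConnectedComponent.ind with | h w =>
  obtain ⟨s, ⟨hs, hsw⟩, hsu⟩ :=
    exists_ttrho_eq_ttrhoSet (u := u) ⟨w, mem_tCompVerts_connectedComponentMk w.2⟩
  rw [← hsw, SimpleGraph.ConnectedComponent.eq, reachable_iff_blockStarts_eq hc hdvd]
  funext i
  have hclose := eq_or_eq_add_one_or_eq_sub_one (close_of_ttrho_le (hsu.trans_le hH) i)
  rw [blockStarts, blockStarts, ← blockStart_add_one_of_close (hdvd i) (hs i) hclose,
    blockStart_add_one_of_close (hdvd i) (hmem i)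
      (eq_or_eq_add_one_or_eq_sub_one (nearestCode_close (u i)))]

lemma isTorusPTMC_codeSet (hc : ∀ i, 2 ≤ c i) (hdvd : ∀ i, c i + 1 ∣ N i) :
    IsTorusPTMC n N n (codeSet N c) :=
  ⟨existsUnique_nearest_codeword hc hdvd, existsUnique_component_near hc hdvd⟩

lemma exists_tCompVerts_codeSet_eq_image (hc : ∀ i, 2 ≤ c i) (hdvd : ∀ i, c i + 1 ∣ N i)
    (H : ((torusGraph n N).induce (codeSet N c)).ConnectedComponent) :
    ∃ w : Fin n → ℤ, tCompVerts n N (codeSet N c) H =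
      (fun v : Fin n → ℤ => fun i => ((v i : ℤ) : ZMod (N i))) ''
        {v : Fin n → ℤ | ∀ i, w i ≤ v i ∧ v i ≤ w i + (c i : ℤ) - 2} := by
  induction H using SimpleGraph.ConnectedComponent.ind with | h b =>
  obtain ⟨b, hb⟩ := b
  refine ⟨fun i => (ZMod.cast (blockStart (c i) (b i)) : ℤ), ?_⟩
  have hbox (i : Fin n) (x : ZMod (N i)) :
      IsCode (c i) x ∧ blockStart (c i) x = blockStart (c i) (b i) ↔
        ∃ v : ℤ, ((ZMod.cast (blockStart (c i) (b i)) : ℤ) ≤ v ∧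
          v ≤ (ZMod.cast (blockStart (c i) (b i)) : ℤ) + c i - 2) ∧ (v : ZMod (N i)) = x := by
    conv_lhs => rw [← ZMod.intCast_zmod_cast (blockStart (c i) (b i))]
    refine isCode_and_blockStart_eq_iff (hdvd i) ?_ x
    rw [ZMod.intCast_zmod_cast]
    exact offset_blockStart (hdvd i) _
  ext x
  rw [tCompVerts_codeSet hc hdvd hb]
  simp only [codeSet, blockStarts, Set.mem_ofPred_eq, Set.mem_image, funext_iff, ← forall_and,
    hbox, Classical.skolem]

end Code

end TorusCode

theorem stmt_4_general (n : ℕ) (c k : Fin n → ℕ) (hc : ∀ i, 2 ≤ c i) :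
    ∃ S : Set (Π i : Fin n, ZMod ((c i + 1) * k i)),
      IsTorusPTMC n (fun i => (c i + 1) * k i) n S ∧
      ∀ H : ((torusGraph n (fun i => (c i + 1) * k i)).induce S).ConnectedComponent,
        ∃ w : Fin n → ℤ,
          tCompVerts n (fun i => (c i + 1) * k i) S H =
            (fun v : Fin n → ℤ => fun i => ((v i : ℤ) : ZMod ((c i + 1) * k i))) ''
              {v : Fin n → ℤ | ∀ i, w i ≤ v i ∧ v i ≤ w i + (c i : ℤ) - 2} := by
  have hdvd (i : Fin n) : c i + 1 ∣ (c i + 1) * k i := dvd_mul_right _ _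
  exact ⟨TorusCode.codeSet _ c, TorusCode.isTorusPTMC_codeSet hc hdvd,
    TorusCode.exists_tCompVerts_codeSet_eq_image hc hdvd⟩

/-- For `c i ≥ 2`, `k i ≥ 1` and `m i = (c i + 1) * k i`, the toroidal
grid `C_{m 0} □ ⋯ □ C_{m (n-1)}` contains an `n`-PTMC whose induced components are the
images under coordinatewise reduction of translates of the box `Π_i {0,…,c i − 2}`. -/
theorem stmt_4 (n : ℕ) (hn : 1 ≤ n) (c k : Fin n → ℕ) (hc : ∀ i, 2 ≤ c i)
    (hk : ∀ i, 1 ≤ k i) :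
    ∃ S : Set (Π i : Fin n, ZMod ((c i + 1) * k i)),
      IsTorusPTMC n (fun i => (c i + 1) * k i) n S ∧
      ∀ H : ((torusGraph n (fun i => (c i + 1) * k i)).induce S).ConnectedComponent,
        ∃ w : Fin n → ℤ,
          tCompVerts n (fun i => (c i + 1) * k i) S H =
            (fun v : Fin n → ℤ => fun i => ((v i : ℤ) : ZMod ((c i + 1) * k i))) ''
              {v : Fin n → ℤ | ∀ i, w i ≤ v i ∧ v i ≤ w i + (c i : ℤ) - 2} :=
  stmt_4_general n c k hc
end

section
/- Let n ≥ 3 and let k_1,…,k_n ≥ 1 be integers. In the toroidal grid C_{6k_1}□⋯□C_{6k_{n−1}}□C_{3k_n} there exists a set S of vertices such that: (a) every connected component of the subgraph induced by S is either the image under coordinatewise reduction of a translate of a fixed binary (n−1)-cube {v ∈ ℤ^n : v_i ∈ {0,1} for i ∈ A, v_j = 0 for j ∉ A} (A a fixed (n−1)-subset of coordinates) or a single vertex, both kinds occurring; (b) the torus truncated spheres of radius 1 around the (n−1)-cube components together with the torus truncated spheres of radius n−2 around the singleton components form a partition of the vertex set; (c) every vertex u has a unique nearest vertex (in torus truncated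 distance) in the component whose sphere contains u. -/
/-!
Let `ℓ` be the last coordinate and `A` the others. The code consists of the *centres*, the
vertices all of whose coordinates are `≡ 0 (mod 3)`, and of the cubes `w + {0,1}^A` whose anchor
`w` has every `A`-coordinate `≡ 1 (mod 3)` and last coordinate `≡ 1` or `2 (mod 3)` according to
the parity of `∑_{i ∈ A} (1 + w_i)`.

Cube vertices have no coordinate `≡ 0 (mod 3)`, so none is adjacent to a centre, and adjacent
cube vertices have the same anchor, which is read off from their residues: the components of the
code are the centres and the cubes. A vertex `u` with at least two coordinates `≡ 0 (mod 3)`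
is within distance `n - 2` of exactly one centre (round each coordinate to the nearest multiple
of `3`) and within distance `1` of no cube. A vertex with at most one such coordinate is within
distance `1` of exactly one cube: away from that coordinate the anchor is forced by the residues
of `u`, while at it the two possible anchor values differ by `3`, hence (as `6 ∣ m_i`) in parity,
and the residue of the last coordinate of `u` selects one of them.
-/

namespace TorusCode

open Finset Function

section Residues

variable {N : ℕ}

def IsClose (x y : ZMod N) : Prop := x = y ∨ x = y + 1 ∨ x = y - 1

lemma isClose_iff {x y : ZMod N} : IsClose x y ↔ x = y ∨ x - y = 1 ∨ x - y = -1 := by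
  rw [IsClose, sub_eq_iff_eq_add', sub_eq_iff_eq_add', ← sub_eq_add_neg]

lemma IsClose.symm {x y : ZMod N} (h : IsClose x y) : IsClose y x := by
  rcases h with rfl | rfl | rfl
  · exact Or.inl rfl
  · exact Or.inr (Or.inr (add_sub_cancel_right y 1).symm)
  · exact Or.inr (Or.inl (sub_add_cancel y 1).symm)

lemma cast_ofNat {K : ℕ} (h : K ∣ N) (a : ℕ) [a.AtLeastTwo] :
    ((ofNat(a) : ZMod N).cast : ZMod K) = ofNat(a) := by
  rw [← Nat.cast_ofNat (R := ZMod N), ← Nat.cast_ofNat (R := ZMod K), ZMod.cast_natCast h]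

lemma eq_of_isClose_of_cast_eq (h : 3 ∣ N) {x a b : ZMod N} (ha : IsClose x a)
    (hb : IsClose x b) (hab : (a.cast : ZMod 3) = b.cast) : a = b := by
  rcases ha.symm with ha | ha | ha <;> rcases hb.symm with hb | hb | hb <;> rw [ha, hb] at hab ⊢ <;>
    first
    | rfl
    | exfalso
      simp only [ZMod.cast_add h, ZMod.cast_sub h, ZMod.cast_one h] at hab
      generalize (x.cast : ZMod 3) = r at hab
      revert r; decide

def anchorCoord (x : ZMod N) : ZMod N := if (x.cast : ZMod 3) = 2 then x - 1 else x

lemma anchorCoord_eq (h : 3 ∣ N) {w x u : ZMod N} (hw : (w.cast : ZMod 3) = 1)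
    (hx : x = w ∨ x = w + 1) (hu : IsClose u x) (hu0 : (u.cast : ZMod 3) ≠ 0) :
    anchorCoord u = w := by
  rcases hu with hu | hu | hu <;> rcases hx with hx | hx <;> rw [hx] at hu <;> subst hu <;>
    simp only [anchorCoord, ZMod.cast_add h, ZMod.cast_sub h, ZMod.cast_one h, hw] at hu0 ⊢
  all_goals first
    | exact absurd hu0 (by decide)
    | (rw [if_pos (by decide)] <;> ring1)
    | (rw [if_neg (by decide)] <;> ring1)

lemma eq_add_one_or_eq_sub_two (h : 3 ∣ N) {w x u : ZMod N} (hw : (w.cast : ZMod 3) = 1)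
    (hx : x = w ∨ x = w + 1) (hu : IsClose u x) (hu0 : (u.cast : ZMod 3) = 0) :
    w = u + 1 ∨ w = u - 2 := by
  rcases hu with hu | hu | hu <;> rcases hx with hx | hx <;> rw [hx] at hu <;> subst hu <;>
    simp only [ZMod.cast_add h, ZMod.cast_sub h, ZMod.cast_one h, hw] at hu0
  all_goals first
    | exact absurd hu0 (by decide)
    | (left; ring1)
    | (right; ring1)

lemma three_ne_zero_of_six_dvd (h : 6 ∣ N) : (3 : ZMod N) ≠ 0 := by
  intro h3
  have : N ∣ 3 := (ZMod.natCast_eq_zero_iff 3 N).mp (by exact_mod_cast h3)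
  have := Nat.le_of_dvd (by norm_num) (h.trans this)
  omega

lemma eq_of_isClose_of_isClose (h : (3 : ZMod N) ≠ 0) {w x y u : ZMod N}
    (hx : x = w ∨ x = w + 1) (hy : y = w ∨ y = w + 1) (hux : IsClose u x)
    (huy : IsClose u y) (hu : ¬(u = w ∨ u = w + 1)) : x = y := by
  rcases hx with rfl | rfl <;> rcases hy with rfl | rfl
  all_goals first
    | rfl
    | exfalso
      rcases hux with hux | hux | hux <;> rcases huy with huy | huy | huy <;>
        first
        | exact hu (.inl (by linear_combination hux))
        | exact hu (.inr (by linear_combination hux))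
        | exact hu (.inl (by linear_combination huy))
        | exact hu (.inr (by linear_combination huy))
        | exact h (by linear_combination huy - hux)
        | exact h (by linear_combination hux - huy)

lemma isClose_sub_valMinAbs (x : ZMod N) (t : ZMod 3) :
    IsClose x (x - (t.valMinAbs : ZMod N)) := by
  have : t.valMinAbs = 0 ∨ t.valMinAbs = 1 ∨ t.valMinAbs = -1 := by revert t; decide
  rcases this with h | h | h <;> rw [h]
  · exact Or.inl (by simp)
  · exact Or.inr (Or.inl (by push_cast; ring))
  · exact Or.inr (Or.inr (by push_cast; ring))

lemma cast_sub_valMinAbs (h : 3 ∣ N) (x : ZMod N) (t : ZMod 3) :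
    ((x - (t.valMinAbs : ZMod N)).cast : ZMod 3) = x.cast - t := by
  rw [ZMod.cast_sub h, ZMod.cast_intCast h, ZMod.coe_valMinAbs]

lemma intCast_valMinAbs_eq_zero_iff (h : 3 ∣ N) (t : ZMod 3) :
    ((t.valMinAbs : ℤ) : ZMod N) = 0 ↔ t = 0 := by
  refine ⟨fun h0 => ?_, fun h0 => by simp [h0]⟩
  have := congrArg (fun x : ZMod N => (x.cast : ZMod 3)) h0
  simpa only [ZMod.cast_intCast h, ZMod.coe_valMinAbs, ZMod.cast_zero] using this

lemma anchorCoord_spec (h : 3 ∣ N) {x : ZMod N} (hx : (x.cast : ZMod 3) ≠ 0) :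
    ((anchorCoord x).cast : ZMod 3) = 1 ∧ (x = anchorCoord x ∨ x = anchorCoord x + 1) := by
  unfold anchorCoord
  split_ifs with h2
  · rw [ZMod.cast_sub h, ZMod.cast_one h, h2]
    exact ⟨by decide, Or.inr (sub_add_cancel x 1).symm⟩
  · refine ⟨?_, Or.inl rfl⟩
    generalize (x.cast : ZMod 3) = r at hx h2
    revert r; decide

end Residues

section Distance

variable {n : ℕ} {m : Fin n → ℕ}

lemma ttrho_le_iff {u v : Π i, ZMod (m i)} {t : ℕ} (ht : t ≤ n) :
    ttrho n m u v ≤ t ↔ (∀ i, IsClose (u i) (v i)) ∧ hammingDist u v ≤ t := by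
  simp only [ttrho, isClose_iff]
  split_ifs with h
  · exact ⟨fun hd => ⟨h, hd⟩, And.right⟩
  · exact ⟨fun hd => by omega, fun hd => absurd hd.1 h⟩

lemma ttrho_eq_zero_iff {u v : Π i, ZMod (m i)} : ttrho n m u v = 0 ↔ u = v := by
  rw [← Nat.le_zero, ttrho_le_iff (Nat.zero_le n), Nat.le_zero, hammingDist_eq_zero]
  exact ⟨And.right, fun h => ⟨fun i => h ▸ Or.inl rfl, h⟩⟩

lemma ttrho_le_one_iff (hn : n ≠ 0) {u v : Π i, ZMod (m i)} :
    ttrho n m u v ≤ 1 ↔ ∃ i, IsClose (u i) (v i) ∧ ∀ j ≠ i, u j = v j := by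
  rw [ttrho_le_iff (by omega)]
  constructor
  · rintro ⟨hclose, hd⟩
    by_cases huv : u = v
    · exact ⟨⟨0, by omega⟩, hclose _, fun j _ => congrFun huv j⟩
    · obtain ⟨i, hi⟩ := Function.ne_iff.mp huv
      refine ⟨i, hclose i, fun j hj => by_contra fun hne => hj ?_⟩
      exact Finset.card_le_one.mp hd j (by simpa using hne) i (by simpa using hi)
  · rintro ⟨i, hi, hj⟩
    refine ⟨fun j => if h : j = i then h ▸ hi else Or.inl (hj j h), ?_⟩
    calc hammingDist u v ≤ ({i} : Finset (Fin n)).card :=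
          Finset.card_le_card fun j hj' => by
            by_contra hji
            exact (Finset.mem_filter.mp hj').2 (hj j (by simpa using hji))
      _ = 1 := Finset.card_singleton i

lemma ttrhoSet_le_s6 {u s : Π i, ZMod (m i)} {T : Set (Π i, ZMod (m i))} (hs : s ∈ T) :
    ttrhoSet n m u T ≤ ttrho n m u s :=
  Nat.sInf_le ⟨s, hs, rfl⟩

lemma exists_ttrho_eq_ttrhoSet_s6 (u : Π i, ZMod (m i)) {T : Set (Π i, ZMod (m i))}
    (hT : T.Nonempty) : ∃ s ∈ T, ttrho n m u s = ttrhoSet n m u T :=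
  Nat.sInf_mem (hT.image (ttrho n m u))

lemma ttrhoSet_le_iff {u : Π i, ZMod (m i)} {T : Set (Π i, ZMod (m i))} (hT : T.Nonempty)
    {t : ℕ} : ttrhoSet n m u T ≤ t ↔ ∃ s ∈ T, ttrho n m u s ≤ t := by
  refine ⟨fun h => ?_, fun ⟨s, hs, hst⟩ => (ttrhoSet_le_s6 hs).trans hst⟩
  obtain ⟨s, hs, hst⟩ := exists_ttrho_eq_ttrhoSet_s6 u hT
  exact ⟨s, hs, hst ▸ h⟩

lemma ttrhoSet_singleton (u p : Π i, ZMod (m i)) : ttrhoSet n m u {p} = ttrho n m u p := by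
  obtain ⟨s, hs, hst⟩ := exists_ttrho_eq_ttrhoSet_s6 u (Set.singleton_nonempty p)
  rw [← hst, Set.mem_singleton_iff.mp hs]

end Distance

lemma hammingDist_update_lt {ι : Type*} [Fintype ι] [DecidableEq ι] {β : ι → Type*}
    [∀ i, DecidableEq (β i)] {x y : Π i, β i} {i : ι} (h : x i ≠ y i) :
    hammingDist (update x i (y i)) y < hammingDist x y := by
  refine Finset.card_lt_card ((Finset.ssubset_iff_of_subset fun j hj => ?_).mpr ⟨i, ?_, ?_⟩)
  · simp only [Finset.mem_filter, Finset.mem_univ, true_and] at hj ⊢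
    have hji : j ≠ i := by rintro rfl; exact hj (update_self _ _ _)
    rwa [update_of_ne hji] at hj
  · simpa using h
  · simp

lemma induce_component_eq_of_closed {V : Type*} (G : SimpleGraph V) {S T : Set V}
    (hTS : T ⊆ S) (hclosed : ∀ a ∈ T, ∀ b ∈ S, G.Adj a b → b ∈ T) {x : V} (hx : x ∈ T)
    (hconn : ∀ a (ha : a ∈ T), (G.induce S).Reachable ⟨x, hTS hx⟩ ⟨a, hTS ha⟩) :
    {v | ∃ h : v ∈ S, (G.induce S).connectedComponentMk ⟨v, h⟩ =
      (G.induce S).connectedComponentMk ⟨x, hTS hx⟩} = T := by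
  have walk_mem : ∀ {a b : S} (_ : (G.induce S).Walk a b), (a : V) ∈ T → (b : V) ∈ T := by
    intro a b q
    induction q with
    | nil => exact id
    | cons hadj _ ih => exact fun ha => ih (hclosed _ ha _ (Subtype.property _) hadj)
  ext y
  constructor
  · rintro ⟨hy, hcomp⟩
    obtain ⟨q⟩ := (SimpleGraph.ConnectedComponent.exact hcomp).symm
    exact walk_mem q hx
  · exact fun hy => ⟨hTS hy, SimpleGraph.ConnectedComponent.sound (hconn y hy).symm⟩

section Code

variable {n : ℕ} {m : Fin n → ℕ} (ℓ : Fin n)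

-- The summand `1 +` is there only to make the all-ones vector an anchor.
def cubeParity (w : Π i, ZMod (m i)) : ZMod 2 :=
  ∑ i ∈ univ.erase ℓ, (1 + ((w i).cast : ZMod 2))

def IsAnchor (w : Π i, ZMod (m i)) : Prop :=
  (∀ i ≠ ℓ, ((w i).cast : ZMod 3) = 1) ∧
    ((w ℓ).cast : ZMod 3) = 1 + ((cubeParity ℓ w).val : ZMod 3)

def cube (w : Π i, ZMod (m i)) : Set (Π i, ZMod (m i)) :=
  {v | (∀ i ≠ ℓ, v i = w i ∨ v i = w i + 1) ∧ v ℓ = w ℓ}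

def centerPoints : Set (Π i, ZMod (m i)) := {p | ∀ i, ((p i).cast : ZMod 3) = 0}

def code : Set (Π i, ZMod (m i)) := centerPoints ∪ {v | ∃ w, IsAnchor ℓ w ∧ v ∈ cube ℓ w}

variable {ℓ}

lemma mem_cube_self (w : Π i, ZMod (m i)) : w ∈ cube ℓ w :=
  ⟨fun _ _ => Or.inl rfl, rfl⟩

lemma mem_code_of_mem_cube {w v : Π i, ZMod (m i)} (hw : IsAnchor ℓ w) (hv : v ∈ cube ℓ w) :
    v ∈ code ℓ :=
  Or.inr ⟨w, hw, hv⟩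

lemma cubeParity_congr {w w' : Π i, ZMod (m i)} (h : ∀ i ≠ ℓ, w i = w' i) :
    cubeParity ℓ w = cubeParity ℓ w' :=
  Finset.sum_congr rfl fun i hi => by rw [h i (Finset.ne_of_mem_erase hi)]

lemma cubeParity_eq_add_one {w w' : Π i, ZMod (m i)} {i₀ : Fin n} (hi₀ : i₀ ≠ ℓ)
    (h2 : 2 ∣ m i₀) (h : ∀ i ≠ i₀, w' i = w i) (h₀ : w' i₀ = w i₀ + 3) :
    cubeParity ℓ w' = cubeParity ℓ w + 1 := by
  have hmem : i₀ ∈ univ.erase ℓ := Finset.mem_erase.mpr ⟨hi₀, Finset.mem_univ _⟩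
  rw [cubeParity, cubeParity, ← Finset.add_sum_erase _ _ hmem,
    ← Finset.add_sum_erase _ _ hmem,
    Finset.sum_congr rfl fun i hi => by rw [h i (Finset.ne_of_mem_erase hi)], h₀,
    ZMod.cast_add h2, cast_ofNat h2]
  have : (3 : ZMod 2) = 1 := rfl
  rw [this]
  ring

lemma cast_ne_zero_of_mem_cube (h3 : ∀ i, 3 ∣ m i) {w v : Π i, ZMod (m i)}
    (hw : IsAnchor ℓ w) (hv : v ∈ cube ℓ w) (i : Fin n) : ((v i).cast : ZMod 3) ≠ 0 := by
  by_cases hi : i = ℓ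
  · subst hi
    rw [hv.2, hw.2]
    generalize cubeParity i w = p
    revert p; decide
  · rcases hv.1 i hi with h | h <;>
      simp only [h, ZMod.cast_add (h3 i), ZMod.cast_one (h3 i), hw.1 i hi] <;> decide

lemma anchorCoord_eq_of_mem_cube (h3 : ∀ i, 3 ∣ m i) {w v : Π i, ZMod (m i)}
    (hw : IsAnchor ℓ w) (hv : v ∈ cube ℓ w) {i : Fin n} (hi : i ≠ ℓ) :
    anchorCoord (v i) = w i :=
  anchorCoord_eq (h3 i) (hw.1 i hi) (hv.1 i hi) (Or.inl rfl)
    (cast_ne_zero_of_mem_cube h3 hw hv i)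

end Code

section Components

variable {n : ℕ} {m : Fin n → ℕ} {ℓ : Fin n}

lemma torusGraph_adj_update {v : Π i, ZMod (m i)} {i : Fin n} {x : ZMod (m i)}
    (hx : x = v i + 1 ∨ x = v i - 1) (hne : x ≠ v i) : (torusGraph n m).Adj v (update v i x) :=
  ⟨fun h => hne (by rw [h, update_self]), i, by rwa [update_self],
    fun j hj => (update_of_ne hj x v).symm⟩

lemma not_adj_of_mem_centerPoints (hn : 2 ≤ n) (h3 : ∀ i, 3 ∣ m i)
    {p y : Π i, ZMod (m i)} (hp : p ∈ centerPoints) (hy : y ∈ code ℓ) :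
    ¬(torusGraph n m).Adj p y := by
  rintro ⟨-, i, hi, hj⟩
  rcases hy with hy | ⟨w, hw, hyw⟩
  · have hyi := hy i
    rcases hi with h | h <;>
      simp only [h, ZMod.cast_add (h3 i), ZMod.cast_sub (h3 i), ZMod.cast_one (h3 i), hp i]
        at hyi <;>
      exact absurd hyi (by decide)
  · have : Nontrivial (Fin n) := Fin.nontrivial_iff_two_le.mpr hn
    obtain ⟨j, hji⟩ := exists_ne i
    exact cast_ne_zero_of_mem_cube h3 hw hyw j (hj j hji ▸ hp j)



lemma anchor_eq_of_adj (h3 : ∀ i, 3 ∣ m i) {w w' x y : Π i, ZMod (m i)}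
    (hw : IsAnchor ℓ w) (hw' : IsAnchor ℓ w') (hx : x ∈ cube ℓ w) (hy : y ∈ cube ℓ w')
    (hadj : (torusGraph n m).Adj x y) : w = w' := by
  obtain ⟨-, i, hi, hxy⟩ := hadj
  have hoff : ∀ j ≠ i, w j = w' j := by
    intro j hji
    by_cases hjℓ : j = ℓ
    · subst hjℓ; rw [← hx.2, hxy j hji, hy.2]
    · rw [← anchorCoord_eq_of_mem_cube h3 hw hx hjℓ, hxy j hji,
        anchorCoord_eq_of_mem_cube h3 hw' hy hjℓ]
  by_cases hiℓ : i = ℓ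
  · subst hiℓ
    have hpar := cubeParity_congr (ℓ := i) fun j hj => hoff j hj
    have hres : ((y i).cast : ZMod 3) = (x i).cast := by rw [hx.2, hy.2, hw.2, hw'.2, hpar]
    exfalso
    rcases hi with h | h <;>
      simp only [h, ZMod.cast_add (h3 i), ZMod.cast_sub (h3 i), ZMod.cast_one (h3 i)] at hres <;>
      generalize ((x i).cast : ZMod 3) = r at hres <;> revert r <;> decide
  · funext j
    by_cases hji : j = i
    · subst hji
      rw [← anchorCoord_eq_of_mem_cube h3 hw' hy hiℓ]
      exact (anchorCoord_eq (h3 j) (hw.1 j hiℓ) (hx.1 j hiℓ) (Or.inr hi)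
        (cast_ne_zero_of_mem_cube h3 hw' hy j)).symm
    · exact hoff j hji

lemma reachable_of_mem_cube {S : Set (Π i, ZMod (m i))} {w : Π i, ZMod (m i)}
    (hS : cube ℓ w ⊆ S) {v v' : Π i, ZMod (m i)} (hv : v ∈ cube ℓ w) (hv' : v' ∈ cube ℓ w) :
    ((torusGraph n m).induce S).Reachable ⟨v, hS hv⟩ ⟨v', hS hv'⟩ := by
  induction h : hammingDist v v' using Nat.strong_induction_on generalizing v with
  | _ d ih =>
    by_cases hvv : v = v'
    · subst hvv; rfl
    obtain ⟨i, hi⟩ := Function.ne_iff.mp hvv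
    have hiℓ : i ≠ ℓ := fun h => hi (by rw [h, hv.2, hv'.2])
    have hstep : v' i = v i + 1 ∨ v' i = v i - 1 := by
      rcases hv.1 i hiℓ with h | h <;> rcases hv'.1 i hiℓ with h' | h' <;> rw [h, h'] at hi ⊢
      all_goals first | exact absurd rfl hi | (left; rfl) | (right; ring1)
    have hv'' : update v i (v' i) ∈ cube ℓ w := by
      refine ⟨fun j hj => ?_, by rw [update_of_ne hiℓ.symm, hv.2]⟩
      by_cases hji : j = i
      · subst hji; rw [update_self]; exact hv'.1 j hj
      · rw [update_of_ne hji]; exact hv.1 j hj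
    have hadj : ((torusGraph n m).induce S).Adj ⟨v, hS hv⟩ ⟨_, hS hv''⟩ :=
      torusGraph_adj_update hstep (Ne.symm hi)
    exact hadj.reachable.trans (ih _ (h ▸ hammingDist_update_lt hi) hv'' rfl)

lemma tCompVerts_of_mem_centerPoints (hn : 2 ≤ n) (h3 : ∀ i, 3 ∣ m i) {p : Π i, ZMod (m i)}
    (hp : p ∈ centerPoints) (hpS : p ∈ code ℓ) :
    tCompVerts n m (code ℓ) (((torusGraph n m).induce (code ℓ)).connectedComponentMk ⟨p, hpS⟩)
      = {p} :=
  induce_component_eq_of_closed _ (Set.singleton_subset_iff.mpr hpS)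
    (fun a ha b hb hab => absurd (ha ▸ hab) (not_adj_of_mem_centerPoints hn h3 hp hb))
    rfl (fun a ha => by subst ha; rfl)

lemma tCompVerts_of_mem_cube (hn : 2 ≤ n) (h3 : ∀ i, 3 ∣ m i) {w v : Π i, ZMod (m i)}
    (hw : IsAnchor ℓ w) (hv : v ∈ cube ℓ w) (hvS : v ∈ code ℓ) :
    tCompVerts n m (code ℓ) (((torusGraph n m).induce (code ℓ)).connectedComponentMk ⟨v, hvS⟩)
      = cube ℓ w := by
  have hcube : cube ℓ w ⊆ code ℓ := fun _ => mem_code_of_mem_cube hw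
  refine induce_component_eq_of_closed _ hcube (fun a ha b hb hab => ?_) hv
    (fun a ha => reachable_of_mem_cube hcube hv ha)
  rcases hb with hb | ⟨w', hw', hbw'⟩
  · exact absurd hab.symm (not_adj_of_mem_centerPoints hn h3 hb (mem_code_of_mem_cube hw ha))
  · rwa [anchor_eq_of_adj h3 hw hw' ha hbw' hab]

lemma tCompVerts_cases (hn : 2 ≤ n) (h3 : ∀ i, 3 ∣ m i)
    (H : ((torusGraph n m).induce (code ℓ)).ConnectedComponent) :
    (∃ p ∈ centerPoints, tCompVerts n m (code ℓ) H = {p}) ∨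
      ∃ w, IsAnchor ℓ w ∧ tCompVerts n m (code ℓ) H = cube ℓ w := by
  obtain ⟨⟨x, hxS⟩, rfl⟩ := H.exists_rep
  rcases hxS with hx | ⟨w, hw, hxw⟩
  · exact .inl ⟨x, hx, tCompVerts_of_mem_centerPoints hn h3 hx _⟩
  · exact .inr ⟨w, hw, tCompVerts_of_mem_cube hn h3 hw hxw _⟩

lemma eq_of_mem_tCompVerts {S : Set (Π i, ZMod (m i))}
    {H₁ H₂ : ((torusGraph n m).induce S).ConnectedComponent} {v : Π i, ZMod (m i)}
    (h₁ : v ∈ tCompVerts n m S H₁) (h₂ : v ∈ tCompVerts n m S H₂) : H₁ = H₂ := by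
  obtain ⟨_, rfl⟩ := h₁
  obtain ⟨_, rfl⟩ := h₂
  rfl

end Components

section Covering

variable {n : ℕ} {m : Fin n → ℕ}

def nearestCenter (u : Π i, ZMod (m i)) : Π i, ZMod (m i) :=
  fun i => u i - (((u i).cast : ZMod 3).valMinAbs : ZMod (m i))

def zeroCoords (u : Π i, ZMod (m i)) : Finset (Fin n) :=
  univ.filter fun i => ((u i).cast : ZMod 3) = 0

lemma nearestCenter_mem_centerPoints (h3 : ∀ i, 3 ∣ m i) (u : Π i, ZMod (m i)) :
    nearestCenter u ∈ centerPoints :=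
  fun i => by rw [nearestCenter, cast_sub_valMinAbs (h3 i), sub_self]

lemma hammingDist_nearestCenter (h3 : ∀ i, 3 ∣ m i) (u : Π i, ZMod (m i)) :
    hammingDist u (nearestCenter u) = n - #(zeroCoords u) := by
  have hne : ∀ i, u i ≠ nearestCenter u i ↔ ((u i).cast : ZMod 3) ≠ 0 := fun i => by
    rw [nearestCenter, Ne, eq_comm, sub_eq_self, intCast_valMinAbs_eq_zero_iff (h3 i)]
  rw [hammingDist, Finset.filter_congr fun i _ => hne i, zeroCoords,
    ← Finset.compl_filter, Finset.card_compl, Fintype.card_fin]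

lemma mem_centerPoints_and_ttrho_le_iff (hn : 2 ≤ n) (h3 : ∀ i, 3 ∣ m i)
    {u p : Π i, ZMod (m i)} :
    p ∈ centerPoints ∧ ttrho n m u p ≤ n - 2 ↔ p = nearestCenter u ∧ 2 ≤ #(zeroCoords u) := by
  have hcard : #(zeroCoords u) ≤ n := (Finset.card_le_univ _).trans (Fintype.card_fin n).le
  rw [ttrho_le_iff (Nat.sub_le n 2)]
  constructor
  · rintro ⟨hp, hclose, hd⟩
    have hpc : p = nearestCenter u := funext fun i =>
      eq_of_isClose_of_cast_eq (h3 i) (hclose i) (isClose_sub_valMinAbs _ _)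
        (by rw [hp i, nearestCenter_mem_centerPoints h3 u i])
    subst hpc
    rw [hammingDist_nearestCenter h3] at hd
    exact ⟨rfl, by omega⟩
  · rintro ⟨rfl, hZ⟩
    refine ⟨nearestCenter_mem_centerPoints h3 u, fun i => isClose_sub_valMinAbs _ _, ?_⟩
    rw [hammingDist_nearestCenter h3]
    omega

variable (ℓ : Fin n) in
def IsNearAnchor (u w : Π i, ZMod (m i)) : Prop :=
  IsAnchor ℓ w ∧ ∃ v ∈ cube ℓ w, ttrho n m u v ≤ 1

variable {ℓ : Fin n}

lemma IsNearAnchor.card_zeroCoords_le_one (h3 : ∀ i, 3 ∣ m i) {u w : Π i, ZMod (m i)}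
    (h : IsNearAnchor ℓ u w) : #(zeroCoords u) ≤ 1 := by
  obtain ⟨hw, v, hv, hd⟩ := h
  refine (Finset.card_le_card fun i hi => ?_).trans ((ttrho_le_iff ℓ.pos).mp hd).2
  simp only [zeroCoords, Finset.mem_filter, Finset.mem_univ, true_and] at hi ⊢
  exact fun huv => cast_ne_zero_of_mem_cube h3 hw hv i (huv ▸ hi)

lemma anchor_eq_of_eq_off (h6 : ∀ i ≠ ℓ, 6 ∣ m i) {w w' : Π i, ZMod (m i)}
    (hw : IsAnchor ℓ w) (hw' : IsAnchor ℓ w') {i₀ : Fin n} (hi₀ : i₀ ≠ ℓ)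
    (hoff : ∀ j ≠ i₀, w j = w' j) (h : w i₀ = w' i₀ ∨ w' i₀ = w i₀ + 3 ∨ w i₀ = w' i₀ + 3) :
    w = w' := by
  have no_shift : ∀ {a b : Π i, ZMod (m i)}, IsAnchor ℓ a → IsAnchor ℓ b →
      (∀ j ≠ i₀, b j = a j) → b i₀ = a i₀ + 3 → False := by
    intro a b ha hb hba hab
    have hpar := cubeParity_eq_add_one hi₀ ((Nat.dvd_mul_right 2 3).trans (h6 i₀ hi₀)) hba hab
    have hres := ha.2
    rw [← hba ℓ hi₀.symm, hb.2, hpar] at hres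
    generalize cubeParity ℓ a = p at hres
    revert p; decide
  funext j
  by_cases hj : j = i₀
  · subst hj
    rcases h with h | h | h
    · exact h
    · exact (no_shift hw hw' (fun j hj => (hoff j hj).symm) h).elim
    · exact (no_shift hw' hw hoff h).elim
  · exact hoff j hj

lemma eq_of_ttrho_le_one_of_cast_eq_zero (h3 : ∀ i, 3 ∣ m i) {w v u : Π i, ZMod (m i)}
    (hw : IsAnchor ℓ w) (hv : v ∈ cube ℓ w) (hd : ttrho n m u v ≤ 1) {i₀ : Fin n}
    (hu₀ : ((u i₀).cast : ZMod 3) = 0) : ∀ j ≠ i₀, u j = v j := by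
  obtain ⟨i, -, hi⟩ := (ttrho_le_one_iff ℓ.pos.ne').mp hd
  obtain rfl : i = i₀ := by
    by_contra hne
    exact cast_ne_zero_of_mem_cube h3 hw hv i₀ (hi i₀ (Ne.symm hne) ▸ hu₀)
  exact hi

lemma IsNearAnchor.unique (h3 : ∀ i, 3 ∣ m i) (h6 : ∀ i ≠ ℓ, 6 ∣ m i)
    {u w w' : Π i, ZMod (m i)} (h : IsNearAnchor ℓ u w) (h' : IsNearAnchor ℓ u w') : w = w' := by
  obtain ⟨hw, v, hv, hd⟩ := h
  obtain ⟨hw', v', hv', hd'⟩ := h'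
  have hclose := ((ttrho_le_iff ℓ.pos).mp hd).1
  have hclose' := ((ttrho_le_iff ℓ.pos).mp hd').1
  have hA : ∀ j ≠ ℓ, ((u j).cast : ZMod 3) ≠ 0 → w j = w' j := fun j hj hu =>
    (anchorCoord_eq (h3 j) (hw.1 j hj) (hv.1 j hj) (hclose j) hu).symm.trans
      (anchorCoord_eq (h3 j) (hw'.1 j hj) (hv'.1 j hj) (hclose' j) hu)
  by_cases hZ : ∀ j ≠ ℓ, ((u j).cast : ZMod 3) ≠ 0
  · have hpar := cubeParity_congr fun j hj => hA j hj (hZ j hj)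
    funext j
    by_cases hj : j = ℓ
    · subst hj
      refine eq_of_isClose_of_cast_eq (h3 j) (hv.2 ▸ hclose j) (hv'.2 ▸ hclose' j) ?_
      rw [hw.2, hw'.2, hpar]
    · exact hA j hj (hZ j hj)
  push Not at hZ
  obtain ⟨i₀, hi₀, hu₀⟩ := hZ
  have huv := eq_of_ttrho_le_one_of_cast_eq_zero h3 hw hv hd hu₀
  have huv' := eq_of_ttrho_le_one_of_cast_eq_zero h3 hw' hv' hd' hu₀
  refine anchor_eq_of_eq_off h6 hw hw' hi₀ (fun j hj => ?_) ?_
  · by_cases hjℓ : j = ℓ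
    · subst hjℓ
      rw [← hv.2, ← huv j hj, huv' j hj, hv'.2]
    · refine hA j hjℓ ?_
      rw [huv j hj]
      exact cast_ne_zero_of_mem_cube h3 hw hv j
  · rcases eq_add_one_or_eq_sub_two (h3 i₀) (hw.1 i₀ hi₀) (hv.1 i₀ hi₀) (hclose i₀) hu₀
        with h | h <;>
      rcases eq_add_one_or_eq_sub_two (h3 i₀) (hw'.1 i₀ hi₀) (hv'.1 i₀ hi₀) (hclose' i₀) hu₀
        with h' | h' <;> rw [h, h']
    all_goals first
      | exact .inl rfl
      | exact .inr (.inl (by ring1))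
      | exact .inr (.inr (by ring1))

lemma exists_isNearAnchor_of_forall_cast_ne_zero (h3 : ∀ i, 3 ∣ m i) {u : Π i, ZMod (m i)}
    (hu : ∀ j ≠ ℓ, ((u j).cast : ZMod 3) ≠ 0) : ∃ w, IsNearAnchor ℓ u w := by
  set p := cubeParity ℓ (fun j => anchorCoord (u j))
  set t : ZMod 3 := ((u ℓ).cast : ZMod 3) - (1 + (p.val : ZMod 3))
  set w := update (fun j => anchorCoord (u j)) ℓ (u ℓ - (t.valMinAbs : ZMod (m ℓ)))
  have hwj : ∀ j ≠ ℓ, w j = anchorCoord (u j) := fun j hj => update_of_ne hj _ _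
  have hwℓ : w ℓ = u ℓ - (t.valMinAbs : ZMod (m ℓ)) := update_self _ _ _
  have hw : IsAnchor ℓ w := by
    refine ⟨fun j hj => ?_, ?_⟩
    · rw [hwj j hj]; exact (anchorCoord_spec (h3 j) (hu j hj)).1
    · rw [hwℓ, cast_sub_valMinAbs (h3 ℓ), cubeParity_congr hwj]; ring
  refine ⟨w, hw, update u ℓ (w ℓ), ⟨fun j hj => ?_, update_self _ _ _⟩,
    (ttrho_le_one_iff ℓ.pos.ne').mpr ⟨ℓ, ?_, fun j hj => (update_of_ne hj _ _).symm⟩⟩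
  · rw [update_of_ne hj, hwj j hj]; exact (anchorCoord_spec (h3 j) (hu j hj)).2
  · rw [update_self, hwℓ]; exact isClose_sub_valMinAbs _ _

lemma exists_isNearAnchor_of_cast_eq_zero (h3 : ∀ i, 3 ∣ m i) (h6 : ∀ i ≠ ℓ, 6 ∣ m i)
    {u : Π i, ZMod (m i)} {i₀ : Fin n} (hi₀ : i₀ ≠ ℓ) (hu₀ : ((u i₀).cast : ZMod 3) = 0)
    (hu : ∀ j ≠ i₀, ((u j).cast : ZMod 3) ≠ 0) : ∃ w, IsNearAnchor ℓ u w := by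
  let w (c : ZMod (m i₀)) : Π i, ZMod (m i) :=
    update (update (fun j => anchorCoord (u j)) ℓ (u ℓ)) i₀ (u i₀ + c)
  have hwℓ : ∀ c, w c ℓ = u ℓ := fun c => by
    simp only [w]; rw [update_of_ne hi₀.symm, update_self]
  have near : ∀ c x, ((u i₀ + c).cast : ZMod 3) = 1 → (x = u i₀ + c ∨ x = u i₀ + c + 1) →
      IsClose (u i₀) x → ((u ℓ).cast : ZMod 3) = 1 + ((cubeParity ℓ (w c)).val : ZMod 3) →
      ∃ w, IsNearAnchor ℓ u w := by
    intro c x hc hx hux hpar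
    have hspec : ∀ j ≠ i₀, j ≠ ℓ → w c j = anchorCoord (u j) := fun j hj hjℓ => by
      simp only [w]; rw [update_of_ne hj, update_of_ne hjℓ]
    refine ⟨w c, ⟨fun j hj => ?_, by rwa [hwℓ]⟩, update u i₀ x, ⟨fun j hj => ?_, ?_⟩,
      (ttrho_le_one_iff ℓ.pos.ne').mpr ⟨i₀, by rwa [update_self], fun j hj => ?_⟩⟩
    · by_cases hji : j = i₀
      · subst hji; simpa only [w, update_self] using hc
      · rw [hspec j hji hj]; exact (anchorCoord_spec (h3 j) (hu j hji)).1
    · by_cases hji : j = i₀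
      · subst hji; simpa only [w, update_self] using hx
      · rw [update_of_ne hji, hspec j hji hj]; exact (anchorCoord_spec (h3 j) (hu j hji)).2
    · rw [update_of_ne hi₀.symm, hwℓ]
    · exact (update_of_ne hj _ _).symm
  have hpar : cubeParity ℓ (w 1) = cubeParity ℓ (w (-2)) + 1 :=
    cubeParity_eq_add_one hi₀ ((Nat.dvd_mul_right 2 3).trans (h6 i₀ hi₀))
      (fun j hj => by simp only [w]; rw [update_of_ne hj, update_of_ne hj])
      (by simp only [w, update_self]; ring)
  have hres : ∀ (r : ZMod 3) (p : ZMod 2), r ≠ 0 →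
      r = 1 + ((p + 1).val : ZMod 3) ∨ r = 1 + (p.val : ZMod 3) := by decide
  rcases hres _ (cubeParity ℓ (w (-2))) (hu ℓ hi₀.symm) with h | h
  · refine near 1 (u i₀ + 1) ?_ (.inl rfl) (.inr (.inr (by ring))) (by rwa [hpar])
    rw [ZMod.cast_add (h3 i₀), ZMod.cast_one (h3 i₀), hu₀, zero_add]
  · refine near (-2) (u i₀ + -2 + 1) ?_ (.inr rfl) (.inr (.inl (by ring))) h
    rw [ZMod.cast_add (h3 i₀), ZMod.cast_neg (h3 i₀), cast_ofNat (h3 i₀), hu₀]; decide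

lemma exists_isNearAnchor (h3 : ∀ i, 3 ∣ m i) (h6 : ∀ i ≠ ℓ, 6 ∣ m i) {u : Π i, ZMod (m i)}
    (hZ : #(zeroCoords u) ≤ 1) : ∃ w, IsNearAnchor ℓ u w := by
  by_cases hu : ∀ j ≠ ℓ, ((u j).cast : ZMod 3) ≠ 0
  · exact exists_isNearAnchor_of_forall_cast_ne_zero h3 hu
  push Not at hu
  obtain ⟨i₀, hi₀, hu₀⟩ := hu
  refine exists_isNearAnchor_of_cast_eq_zero h3 h6 hi₀ hu₀ fun j hj huj => hj ?_
  exact Finset.card_le_one.mp hZ j (by simpa [zeroCoords] using huj) i₀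
    (by simpa [zeroCoords] using hu₀)

lemma eq_of_ttrho_le_one_of_notMem_cube (h3 : ∀ i ≠ ℓ, (3 : ZMod (m i)) ≠ 0)
    {w u v v' : Π i, ZMod (m i)} (hu : u ∉ cube ℓ w) (hv : v ∈ cube ℓ w) (hv' : v' ∈ cube ℓ w)
    (hd : ttrho n m u v ≤ 1) (hd' : ttrho n m u v' ≤ 1) : v = v' := by
  obtain ⟨a, ha, hua⟩ := (ttrho_le_one_iff ℓ.pos.ne').mp hd
  obtain ⟨b, hb, hub⟩ := (ttrho_le_one_iff ℓ.pos.ne').mp hd'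
  have mem_of : (∀ j, u j = v j ∨ u j = v' j) → u ∈ cube ℓ w := fun h =>
    ⟨fun j hj => (h j).elim (· ▸ hv.1 j hj) (· ▸ hv'.1 j hj),
      (h ℓ).elim (·.trans hv.2) (·.trans hv'.2)⟩
  by_cases hab : a = b
  · subst hab
    funext j
    by_cases hja : j = a
    · subst hja
      by_cases hjℓ : j = ℓ
      · subst hjℓ; exact hv.2.trans hv'.2.symm
      refine eq_of_isClose_of_isClose (h3 j hjℓ) (hv.1 j hjℓ) (hv'.1 j hjℓ) ha hb fun hpair => hu ?_
      exact ⟨fun i hi => if hij : i = j then hij ▸ hpair else hua i hij ▸ hv.1 i hi,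
        (hua ℓ (Ne.symm hjℓ)).trans hv.2⟩
    · exact (hua j hja).symm.trans (hub j hja)
  · refine (hu (mem_of fun j => ?_)).elim
    exact if hja : j = a then .inr (hub j (hja ▸ hab)) else .inl (hua j hja)

lemma existsUnique_nearest_of_ttrhoSet_cube_le_one (h3 : ∀ i ≠ ℓ, (3 : ZMod (m i)) ≠ 0)
    {u w : Π i, ZMod (m i)} (hle : ttrhoSet n m u (cube ℓ w) ≤ 1) :
    ∃! v, v ∈ cube ℓ w ∧ ttrho n m u v = ttrhoSet n m u (cube ℓ w) := by
  obtain ⟨v, hv, hvd⟩ := exists_ttrho_eq_ttrhoSet_s6 u ⟨w, mem_cube_self w⟩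
  refine ⟨v, ⟨hv, hvd⟩, fun v' ⟨hv', hv'd⟩ => ?_⟩
  by_cases hu : u ∈ cube ℓ w
  · have h0 : ttrhoSet n m u (cube ℓ w) = 0 :=
      Nat.le_zero.mp ((ttrhoSet_le_s6 hu).trans (ttrho_eq_zero_iff.mpr rfl).le)
    rw [← ttrho_eq_zero_iff.mp (hv'd.trans h0), ttrho_eq_zero_iff.mp (hvd.trans h0)]
  · exact eq_of_ttrho_le_one_of_notMem_cube h3 hu hv' hv (hv'd ▸ hle) (hvd ▸ hle)

end Covering

section Spheres

variable {n : ℕ} {m : Fin n → ℕ} {ℓ : Fin n}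

variable (m) in
def reduceInt (t : Fin n → ℤ) : Π i, ZMod (m i) := fun i => (t i : ZMod (m i))

lemma image_translateCube (t : Fin n → ℤ) :
    reduceInt m '' translateCube n (univ.erase ℓ) t = cube ℓ (reduceInt m t) := by
  ext x
  simp only [translateCube, Finset.mem_erase, Finset.mem_univ, and_true, not_not]
  constructor
  · rintro ⟨s, ⟨hs, hsℓ⟩, rfl⟩
    refine ⟨fun i hi => ?_, by simp [reduceInt, hsℓ ℓ rfl]⟩
    rcases hs i hi with h | h <;> simp [reduceInt, h]
  · rintro ⟨hx, hxℓ⟩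
    change ∀ i ≠ ℓ, x i = (t i : ZMod (m i)) ∨ x i = t i + 1 at hx
    change x ℓ = (t ℓ : ZMod (m ℓ)) at hxℓ
    refine ⟨fun i => if x i = (t i : ZMod (m i)) then t i else t i + 1, ⟨fun i _ => ?_, ?_⟩, ?_⟩
    · by_cases h : x i = (t i : ZMod (m i)) <;> simp [h]
    · rintro j rfl; simp [hxℓ]
    · funext i
      by_cases h : x i = (t i : ZMod (m i))
      · simp [reduceInt, h]
      · have hi : i ≠ ℓ := by rintro rfl; exact h hxℓ
        simpa [reduceInt, h] using ((hx i hi).resolve_left h).symm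

lemma cube_eq_image_translateCube (w : Π i, ZMod (m i)) :
    cube ℓ w = reduceInt m '' translateCube n (univ.erase ℓ) fun i => ((w i).cast : ℤ) := by
  rw [image_translateCube]
  congr
  exact (funext fun i => ZMod.intCast_zmod_cast (w i)).symm

lemma cube_ne_singleton (hn : 2 ≤ n) (h3 : ∀ i, 3 ∣ m i) (w p : Π i, ZMod (m i)) :
    cube ℓ w ≠ {p} := by
  intro h
  have : Nontrivial (Fin n) := Fin.nontrivial_iff_two_le.mpr hn
  obtain ⟨j, hj⟩ := exists_ne ℓ
  have : Nontrivial (ZMod (m j)) := ZMod.nontrivial_iff.mpr fun h1 => by simpa [h1] using h3 j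
  have hw : w ∈ cube ℓ w := mem_cube_self w
  have hw' : update w j (w j + 1) ∈ cube ℓ w :=
    ⟨fun i _ => if hij : i = j then hij ▸ .inr (update_self _ _ _)
      else .inl (update_of_ne hij _ _), update_of_ne hj.symm _ _⟩
  rw [h, Set.mem_singleton_iff] at hw hw'
  have := congrFun (hw'.trans hw.symm) j
  rw [update_self, add_eq_left] at this
  exact one_ne_zero this

lemma zero_mem_centerPoints : (0 : Π i, ZMod (m i)) ∈ centerPoints :=
  fun _ => ZMod.cast_zero

lemma isAnchor_one (h3 : ∀ i, 3 ∣ m i) (h6 : ∀ i ≠ ℓ, 6 ∣ m i) :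
    IsAnchor ℓ (1 : Π i, ZMod (m i)) := by
  have hpar : cubeParity ℓ (1 : Π i, ZMod (m i)) = 0 :=
    Finset.sum_eq_zero fun i hi => by
      rw [Pi.one_apply, ZMod.cast_one ((Nat.dvd_mul_right 2 3).trans
        (h6 i (Finset.ne_of_mem_erase hi)))]
      rfl
  exact ⟨fun i _ => ZMod.cast_one (h3 i), by rw [hpar, Pi.one_apply, ZMod.cast_one (h3 ℓ)]; rfl⟩

variable (ℓ) in
def InSphere (u : Π i, ZMod (m i))
    (H : ((torusGraph n m).induce (code ℓ)).ConnectedComponent) : Prop :=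
  ((∃ t : Fin n → ℤ,
      tCompVerts n m (code ℓ) H = reduceInt m '' translateCube n (univ.erase ℓ) t) ∧
    ttrhoSet n m u (tCompVerts n m (code ℓ) H) ≤ 1) ∨
  ((∃ v, tCompVerts n m (code ℓ) H = {v}) ∧ ttrhoSet n m u (tCompVerts n m (code ℓ) H) ≤ n - 2)

lemma inSphere_iff_of_tCompVerts_eq_cube (hn : 2 ≤ n) (h3 : ∀ i, 3 ∣ m i)
    {H : ((torusGraph n m).induce (code ℓ)).ConnectedComponent} {w : Π i, ZMod (m i)}
    (hw : IsAnchor ℓ w) (hH : tCompVerts n m (code ℓ) H = cube ℓ w) {u : Π i, ZMod (m i)} :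
    InSphere ℓ u H ↔ IsNearAnchor ℓ u w := by
  simp only [InSphere, hH, ttrhoSet_le_iff ⟨w, mem_cube_self w⟩]
  refine ⟨?_, fun ⟨_, h⟩ => .inl ⟨⟨_, cube_eq_image_translateCube w⟩, h⟩⟩
  rintro (⟨-, h⟩ | ⟨⟨v, hv⟩, -⟩)
  · exact ⟨hw, h⟩
  · exact absurd hv (cube_ne_singleton hn h3 w v)

lemma inSphere_iff_of_tCompVerts_eq_singleton (hn : 2 ≤ n) (h3 : ∀ i, 3 ∣ m i)
    {H : ((torusGraph n m).induce (code ℓ)).ConnectedComponent} {p : Π i, ZMod (m i)}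
    (hp : p ∈ centerPoints) (hH : tCompVerts n m (code ℓ) H = {p}) {u : Π i, ZMod (m i)} :
    InSphere ℓ u H ↔ p = nearestCenter u ∧ 2 ≤ #(zeroCoords u) := by
  rw [← mem_centerPoints_and_ttrho_le_iff hn h3]
  simp only [InSphere, hH, image_translateCube, ttrhoSet_singleton]
  constructor
  · rintro (⟨⟨t, ht⟩, -⟩ | ⟨-, h⟩)
    · exact absurd ht.symm (cube_ne_singleton hn h3 _ p)
    · exact ⟨hp, h⟩
  · exact fun h => .inr ⟨⟨p, rfl⟩, h.2⟩

lemma existsUnique_inSphere (hn : 2 ≤ n) (h3 : ∀ i, 3 ∣ m i) (h6 : ∀ i ≠ ℓ, 6 ∣ m i)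
    (u : Π i, ZMod (m i)) : ∃! H, InSphere ℓ u H := by
  by_cases hZ : 2 ≤ #(zeroCoords u)
  · have hc := nearestCenter_mem_centerPoints h3 u
    have hcS : nearestCenter u ∈ code ℓ := Or.inl hc
    refine ⟨_, (inSphere_iff_of_tCompVerts_eq_singleton hn h3 hc
      (tCompVerts_of_mem_centerPoints hn h3 hc hcS)).mpr ⟨rfl, hZ⟩, fun H hH => ?_⟩
    rcases tCompVerts_cases hn h3 H with ⟨p, hp, hHp⟩ | ⟨w, hw, hHw⟩
    · obtain ⟨rfl, -⟩ := (inSphere_iff_of_tCompVerts_eq_singleton hn h3 hp hHp).mp hH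
      exact eq_of_mem_tCompVerts (hHp ▸ rfl) ⟨hcS, rfl⟩
    · have := ((inSphere_iff_of_tCompVerts_eq_cube hn h3 hw hHw).mp hH).card_zeroCoords_le_one h3
      omega
  · obtain ⟨w, hw, v, hv, hd⟩ := exists_isNearAnchor (ℓ := ℓ) h3 h6 (u := u) (by omega)
    have hvS := mem_code_of_mem_cube hw hv
    refine ⟨_, (inSphere_iff_of_tCompVerts_eq_cube hn h3 hw
      (tCompVerts_of_mem_cube hn h3 hw hv hvS)).mpr ⟨hw, v, hv, hd⟩, fun H hH => ?_⟩
    rcases tCompVerts_cases hn h3 H with ⟨p, hp, hHp⟩ | ⟨w', hw', hHw'⟩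
    · exact absurd ((inSphere_iff_of_tCompVerts_eq_singleton hn h3 hp hHp).mp hH).2 hZ
    · have hww := ((inSphere_iff_of_tCompVerts_eq_cube hn h3 hw' hHw').mp hH).unique h3 h6
        ⟨hw, v, hv, hd⟩
      exact eq_of_mem_tCompVerts (hHw' ▸ hww ▸ hv) ⟨hvS, rfl⟩

lemma existsUnique_nearest_of_inSphere (hn : 2 ≤ n) (h3 : ∀ i, 3 ∣ m i)
    (h6 : ∀ i ≠ ℓ, 6 ∣ m i) {u : Π i, ZMod (m i)}
    {H : ((torusGraph n m).induce (code ℓ)).ConnectedComponent} (hH : InSphere ℓ u H) :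
    ∃! v, v ∈ tCompVerts n m (code ℓ) H ∧
      ttrho n m u v = ttrhoSet n m u (tCompVerts n m (code ℓ) H) := by
  rcases tCompVerts_cases hn h3 H with ⟨p, -, hHp⟩ | ⟨w, hw, hHw⟩
  · rw [hHp, ttrhoSet_singleton]
    exact ⟨p, ⟨rfl, rfl⟩, fun v hv => hv.1⟩
  · obtain ⟨-, v, hv, hd⟩ := (inSphere_iff_of_tCompVerts_eq_cube hn h3 hw hHw).mp hH
    rw [hHw]
    exact existsUnique_nearest_of_ttrhoSet_cube_le_one
      (fun i hi => three_ne_zero_of_six_dvd (h6 i hi)) ((ttrhoSet_le_s6 hv).trans hd)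

end Spheres

end TorusCode

open TorusCode Finset

theorem stmt_6_general (n : ℕ) (hn : 3 ≤ n) (k : Fin n → ℕ) :
    ∃ (S : Set (Π i : Fin n, ZMod ((fun i : Fin n =>
          if (i : ℕ) < n - 1 then 6 * k i else 3 * k i) i)))
      (A : Finset (Fin n)), A.card = n - 1 ∧
      letI m : Fin n → ℕ := fun i : Fin n => if (i : ℕ) < n - 1 then 6 * k i else 3 * k i
      letI π : (Fin n → ℤ) → Π i : Fin n, ZMod (m i) :=
        fun v => fun i => ((v i : ℤ) : ZMod (m i))
      (∀ H : ((torusGraph n m).induce S).ConnectedComponent,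
        (∃ w : Fin n → ℤ, tCompVerts n m S H = π '' translateCube n A w) ∨
        (∃ v, tCompVerts n m S H = {v})) ∧
      (∃ H : ((torusGraph n m).induce S).ConnectedComponent, ∃ w : Fin n → ℤ,
        tCompVerts n m S H = π '' translateCube n A w) ∧
      (∃ H : ((torusGraph n m).induce S).ConnectedComponent, ∃ v,
        tCompVerts n m S H = {v}) ∧
      (∀ u : Π i, ZMod (m i), ∃! H : ((torusGraph n m).induce S).ConnectedComponent,
        ((∃ w : Fin n → ℤ, tCompVerts n m S H = π '' translateCube n A w) ∧
          ttrhoSet n m u (tCompVerts n m S H) ≤ 1) ∨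
        ((∃ v, tCompVerts n m S H = {v}) ∧
          ttrhoSet n m u (tCompVerts n m S H) ≤ n - 2)) ∧
      (∀ u : Π i, ZMod (m i), ∀ H : ((torusGraph n m).induce S).ConnectedComponent,
        (((∃ w : Fin n → ℤ, tCompVerts n m S H = π '' translateCube n A w) ∧
            ttrhoSet n m u (tCompVerts n m S H) ≤ 1) ∨
          ((∃ v, tCompVerts n m S H = {v}) ∧
            ttrhoSet n m u (tCompVerts n m S H) ≤ n - 2)) →
        ∃! w, w ∈ tCompVerts n m S H ∧
          ttrho n m u w = ttrhoSet n m u (tCompVerts n m S H)) := by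
  set ℓ : Fin n := ⟨n - 1, by omega⟩
  have hℓ : ∀ i : Fin n, (i : ℕ) < n - 1 ↔ i ≠ ℓ := fun i => by
    simp only [ℓ, Ne, Fin.ext_iff]; omega
  have h3 : ∀ i : Fin n, 3 ∣ if (i : ℕ) < n - 1 then 6 * k i else 3 * k i := fun i => by
    split_ifs
    · exact (Nat.dvd_mul_left 3 2).trans (Nat.dvd_mul_right 6 (k i))
    · exact Nat.dvd_mul_right 3 (k i)
  have h6 : ∀ i ≠ ℓ, 6 ∣ if (i : ℕ) < n - 1 then 6 * k i else 3 * k i := fun i hi => by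
    rw [if_pos ((hℓ i).mpr hi)]; exact Nat.dvd_mul_right 6 (k i)
  refine ⟨code ℓ, univ.erase ℓ, by simp, fun H => ?_, ?_, ?_,
    existsUnique_inSphere (by omega) h3 h6,
    fun u H => existsUnique_nearest_of_inSphere (by omega) h3 h6⟩
  · rcases tCompVerts_cases (by omega) h3 H with ⟨p, -, hH⟩ | ⟨w, -, hH⟩
    · exact .inr ⟨p, hH⟩
    · exact .inl ⟨_, hH.trans (cube_eq_image_translateCube w)⟩
  · have hw := isAnchor_one h3 h6
    exact ⟨_, _, (tCompVerts_of_mem_cube (by omega) h3 hw (mem_cube_self 1)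
      (mem_code_of_mem_cube hw (mem_cube_self 1))).trans (cube_eq_image_translateCube 1)⟩
  · exact ⟨_, 0, tCompVerts_of_mem_centerPoints (by omega) h3 zero_mem_centerPoints
      (Or.inl zero_mem_centerPoints)⟩

/-- In the toroidal grid `C_{6k₁} □ ⋯ □ C_{6k_{n−1}} □ C_{3k_n}`
(`n ≥ 3`) there is a set `S` whose induced components are the reductions of translates
of a fixed binary `(n−1)`-cube and single vertices (both kinds occurring), such that the
torus truncated spheres of radius `1` around the cube components and radius `n−2` around
the singleton components partition the vertex set, with unique nearest central vertex. -/
theorem stmt_6 (n : ℕ) (hn : 3 ≤ n) (k : Fin n → ℕ) (hk : ∀ i, 1 ≤ k i) :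
    ∃ (S : Set (Π i : Fin n, ZMod ((fun i : Fin n =>
          if (i : ℕ) < n - 1 then 6 * k i else 3 * k i) i)))
      (A : Finset (Fin n)), A.card = n - 1 ∧
      letI m : Fin n → ℕ := fun i : Fin n => if (i : ℕ) < n - 1 then 6 * k i else 3 * k i
      letI π : (Fin n → ℤ) → Π i : Fin n, ZMod (m i) :=
        fun v => fun i => ((v i : ℤ) : ZMod (m i))
      (∀ H : ((torusGraph n m).induce S).ConnectedComponent,
        (∃ w : Fin n → ℤ, tCompVerts n m S H = π '' translateCube n A w) ∨
        (∃ v, tCompVerts n m S H = {v})) ∧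
      (∃ H : ((torusGraph n m).induce S).ConnectedComponent, ∃ w : Fin n → ℤ,
        tCompVerts n m S H = π '' translateCube n A w) ∧
      (∃ H : ((torusGraph n m).induce S).ConnectedComponent, ∃ v,
        tCompVerts n m S H = {v}) ∧
      (∀ u : Π i, ZMod (m i), ∃! H : ((torusGraph n m).induce S).ConnectedComponent,
        ((∃ w : Fin n → ℤ, tCompVerts n m S H = π '' translateCube n A w) ∧
          ttrhoSet n m u (tCompVerts n m S H) ≤ 1) ∨
        ((∃ v, tCompVerts n m S H = {v}) ∧
          ttrhoSet n m u (tCompVerts n m S H) ≤ n - 2)) ∧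
      (∀ u : Π i, ZMod (m i), ∀ H : ((torusGraph n m).induce S).ConnectedComponent,
        (((∃ w : Fin n → ℤ, tCompVerts n m S H = π '' translateCube n A w) ∧
            ttrhoSet n m u (tCompVerts n m S H) ≤ 1) ∨
          ((∃ v, tCompVerts n m S H = {v}) ∧
            ttrhoSet n m u (tCompVerts n m S H) ≤ n - 2)) →
        ∃! w, w ∈ tCompVerts n m S H ∧
          ttrho n m u w = ttrhoSet n m u (tCompVerts n m S H)) :=
  stmt_6_general n hn k
end

section
/- For integers m, n ≥ 3, the grid graph P_m□P_n (the cartesian product of a path on m vertices and a path on n vertices) has an efficient dominating set if and only if m = n = 4. -/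
namespace S14


def eo (a b c d e : Bool) : Bool :=
  a.toNat + b.toNat + c.toNat + d.toNat + e.toNat == 1

def att (a b c d : Bool) : Bool :=
  decide (2 ≤ a.toNat + b.toNat + c.toNat + d.toNat)

theorem eo_att : ∀ a b c d e : Bool, eo a b c d e = true → att a b c e = false := by decide
theorem eo_prop : ∀ a b c d e : Bool, eo a b c d e = true → d = !(a || b || c || e) := by decide
theorem eo_symm : ∀ a b c d e : Bool, eo c d a b e = eo a b c d e := by decide
theorem orsw : ∀ a b c d : Bool, (a || b || c || d) = (a || b || d || c) := by decide
theorem att1 : ∀ a : Bool, att a false false false = false := by decide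

def nxt (m : ℕ) (p c : ℕ → Bool) : ℕ → Bool :=
  fun i => if i < m then !((if i = 0 then false else c (i-1)) || c (i+1) || c i || p i) else false

def cp (m : ℕ) (c0 : ℕ → Bool) : ℕ → (ℕ → Bool) × (ℕ → Bool)
  | 0 => (fun _ => false, c0)
  | j+1 => ((cp m c0 j).2, nxt m (cp m c0 j).1 (cp m c0 j).2)

def ext (w : ℕ) (c0 : Fin w → Bool) : ℕ → Bool :=
  fun i => if h : i < w then c0 ⟨i, h⟩ else false

def attC (m : ℕ) (c0 : ℕ → Bool) (j i : ℕ) : Bool :=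
  att (if i = 0 then false else (cp m c0 j).2 (i-1)) ((cp m c0 j).2 (i+1))
      ((cp m c0 j).1 i) ((cp m c0 j).2 i)

def eoC (m : ℕ) (c0 : ℕ → Bool) (j i : ℕ) : Bool :=
  eo (if i = 0 then false else (cp m c0 j).2 (i-1)) ((cp m c0 j).2 (i+1))
      ((cp m c0 j).1 i) ((cp m c0 (j+1)).2 i) ((cp m c0 j).2 i)

section Abstract
variable (m n : ℕ) (y : ℕ → ℕ → Bool)

def U (i j : ℕ) : Bool := if i = 0 then false else y (i-1) j
def L (i j : ℕ) : Bool := if j = 0 then false else y i (j-1)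

def Z0 : Prop := ∀ i j, m ≤ i ∨ n ≤ j → y i j = false
def EOhyp : Prop := ∀ i j, i < m → j < n →
  eo (U y i j) (y (i+1) j) (L y i j) (y i (j+1)) (y i j) = true

variable (h0 : Z0 m n y) (hEO : EOhyp m n y)
include h0 hEO

theorem bridge : ∀ j, j ≤ n →
    (∀ i, (cp m (fun i => y i 0) j).2 i = y i j) ∧
    (∀ i, (cp m (fun i => y i 0) j).1 i = L y i j) := by
  intro j
  induction j with
  | zero => exact fun _ => ⟨fun i => rfl, fun i => by simp [cp, L]⟩
  | succ j ih =>
    intro hj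
    obtain ⟨h2, h1⟩ := ih (Nat.le_of_succ_le hj)
    refine ⟨fun i => ?_, fun i => ?_⟩
    · show nxt m (cp m _ j).1 (cp m _ j).2 i = y i (j+1)
      by_cases him : i < m
      · have hjn : j < n := hj
        have hp := eo_prop _ _ _ _ _ (hEO i j him hjn)
        simp only [U] at hp
        rw [nxt]
        simp only [h2, h1, if_pos him]
        rw [orsw, ← hp]
      · rw [nxt, if_neg him]
        exact (h0 i (j+1) (Or.inl (Nat.le_of_not_lt him))).symm
    · show (cp m _ j).2 i = L y i (j+1)
      rw [h2 i]
      simp [L]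

theorem attD : ∀ j i, j < n → attC m (fun i => y i 0) j i = false := by
  intro j i hj
  obtain ⟨h2, h1⟩ := bridge m n y h0 hEO j (Nat.le_of_lt hj)
  rw [attC]
  simp only [h2, h1]
  by_cases him : i < m
  · exact eo_att _ _ _ _ _ (hEO i j him hj)
  · have hm' : m ≤ i := Nat.le_of_not_lt him
    rw [h0 (i+1) j (Or.inl (by omega)), h0 i j (Or.inl hm')]
    have : L y i j = false := by
      rw [L]; split
      · rfl
      · exact h0 i (j-1) (Or.inl hm')
    rw [this]
    exact att1 _

theorem eoD : ∀ j i, j < n → i < m → eoC m (fun i => y i 0) j i = true := by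
  intro j i hj him
  obtain ⟨h2, h1⟩ := bridge m n y h0 hEO j (Nat.le_of_lt hj)
  obtain ⟨h2', _⟩ := bridge m n y h0 hEO (j+1) hj
  rw [eoC]
  simp only [h2, h1, h2']
  exact hEO i j him hj

theorem colN : ∀ i, (cp m (fun i => y i 0) n).2 i = false := by
  intro i
  obtain ⟨h2, _⟩ := bridge m n y h0 hEO n le_rfl
  rw [h2 i]
  exact h0 i n (Or.inr le_rfl)

end Abstract


-- finite facts
theorem FS3 : ∀ c0 : Fin 3 → Bool, ∃ j : Fin 4, ∃ i : Fin 3, attC 3 (ext 3 c0) j i = true := by decide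
theorem FS5 : ∀ c0 : Fin 5 → Bool, ∃ j : Fin 4, ∃ i : Fin 5, attC 5 (ext 5 c0) j i = true := by decide
theorem FS4 : ∀ c0 : Fin 4 → Bool, ∃ j : Fin 6, ∃ i : Fin 4, attC 4 (ext 4 c0) j i = true := by decide
theorem P33 : ∀ c0 : Fin 3 → Bool, ¬ ((∀ j : Fin 3, ∀ i : Fin 3, eoC 3 (ext 3 c0) j i = true) ∧ (∀ i : Fin 3, (cp 3 (ext 3 c0) 3).2 i = false)) := by decide
theorem P53 : ∀ c0 : Fin 5 → Bool, ¬ ((∀ j : Fin 3, ∀ i : Fin 5, eoC 5 (ext 5 c0) j i = true) ∧ (∀ i : Fin 5, (cp 5 (ext 5 c0) 3).2 i = false)) := by decide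
theorem P43 : ∀ c0 : Fin 4 → Bool, ¬ ((∀ j : Fin 3, ∀ i : Fin 4, eoC 4 (ext 4 c0) j i = true) ∧ (∀ i : Fin 4, (cp 4 (ext 4 c0) 3).2 i = false)) := by decide
theorem P45 : ∀ c0 : Fin 4 → Bool, ¬ ((∀ j : Fin 5, ∀ i : Fin 4, eoC 4 (ext 4 c0) j i = true) ∧ (∀ i : Fin 4, (cp 4 (ext 4 c0) 5).2 i = false)) := by decide

section Strip
variable {w n : ℕ} {y : ℕ → ℕ → Bool}

theorem extEq (h0 : Z0 w n y) : (fun i => y i 0) = ext w (fun i : Fin w => y i 0) := by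
  funext i
  by_cases h : i < w
  · simp [ext, h]
  · simp only [ext, dif_neg h]
    exact h0 i 0 (Or.inl (Nat.le_of_not_lt h))

theorem smallKill (hw : 0 < w) (hnn : 0 < n)
    (h0 : Z0 w n y) (hEO : EOhyp w n y)
    (hP : ¬ ((∀ j : Fin n, ∀ i : Fin w, eoC w (ext w (fun i : Fin w => y i 0)) j i = true) ∧
      (∀ i : Fin w, (cp w (ext w (fun i : Fin w => y i 0)) n).2 i = false))) : False := by
  apply hP
  constructor
  · intro j i
    have := eoD w n y h0 hEO j i j.2 i.2
    rwa [extEq h0] at this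
  · intro i
    have := colN w n y h0 hEO i
    rwa [extEq h0] at this

theorem bigKill {K : ℕ} (hnK : K ≤ n)
    (h0 : Z0 w n y) (hEO : EOhyp w n y)
    (hF : ∃ j : Fin K, ∃ i : Fin w, attC w (ext w (fun i : Fin w => y i 0)) j i = true) : False := by
  obtain ⟨j, i, hji⟩ := hF
  have := attD w n y h0 hEO j i (lt_of_lt_of_le j.2 hnK)
  rw [extEq h0] at this
  rw [this] at hji
  exact Bool.false_ne_true hji

theorem strip3 (hn : 3 ≤ n) (h0 : Z0 3 n y) (hEO : EOhyp 3 n y) : False := by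
  rcases Nat.lt_or_ge n 4 with h4 | h4
  · have : n = 3 := by omega
    subst this
    exact smallKill (by norm_num) (by norm_num) h0 hEO (P33 _)
  · exact bigKill h4 h0 hEO (FS3 _)

theorem strip5 (hn : 3 ≤ n) (h0 : Z0 5 n y) (hEO : EOhyp 5 n y) : False := by
  rcases Nat.lt_or_ge n 4 with h4 | h4
  · have : n = 3 := by omega
    subst this
    exact smallKill (by norm_num) (by norm_num) h0 hEO (P53 _)
  · exact bigKill h4 h0 hEO (FS5 _)

theorem strip4 (hn : 3 ≤ n) (h0 : Z0 4 n y) (hEO : EOhyp 4 n y) : n = 4 := by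
  by_contra hne
  rcases Nat.lt_or_ge n 6 with h6 | h6
  · interval_cases n
    · exact smallKill (by norm_num) (by norm_num) h0 hEO (P43 _)
    · exact hne rfl
    · exact smallKill (by norm_num) (by norm_num) h0 hEO (P45 _)
  · exact bigKill h6 h0 hEO (FS4 _)

end Strip

-- corner machinery
def nxt6 (p c : ℕ → Bool) (bb : Bool) : ℕ → Bool :=
  fun i => if i < 5 then !((if i = 0 then false else c (i-1)) || c (i+1) || c i || p i)
    else if i = 5 then bb else false

def cpc (c0 : ℕ → Bool) (b : Fin 5 → Bool) : ℕ → (ℕ → Bool) × (ℕ → Bool)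
  | 0 => (fun _ => false, c0)
  | j+1 => ((cpc c0 b j).2, nxt6 (cpc c0 b j).1 (cpc c0 b j).2 (if h : j < 5 then b ⟨j,h⟩ else false))

def attK (c0 : ℕ → Bool) (b : Fin 5 → Bool) (j i : ℕ) : Bool :=
  att (if i = 0 then false else (cpc c0 b j).2 (i-1)) ((cpc c0 b j).2 (i+1))
      ((cpc c0 b j).1 i) ((cpc c0 b j).2 i)

set_option maxRecDepth 10000 in
theorem F6 : ∀ c0 : Fin 6 → Bool, ∀ b : Fin 5 → Bool,
    ∃ j : Fin 6, ∃ i : Fin 5, attK (ext 6 c0) b j i = true := by decide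

section Corner
variable {m n : ℕ} {y : ℕ → ℕ → Bool} (hm : 6 ≤ m) (hn : 6 ≤ n)
variable (h0 : Z0 m n y) (hEO : EOhyp m n y)
include hm hn h0 hEO

theorem bridge6 : ∀ j, j ≤ 5 →
    (∀ i, i ≤ 5 → (cpc (ext 6 (fun i : Fin 6 => y i 0)) (fun j : Fin 5 => y 5 (j.val+1)) j).2 i = y i j) ∧
    (∀ i, i ≤ 4 → (cpc (ext 6 (fun i : Fin 6 => y i 0)) (fun j : Fin 5 => y 5 (j.val+1)) j).1 i = L y i j) := by
  intro j
  induction j with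
  | zero =>
    refine fun _ => ⟨fun i hi => ?_, fun i _ => by simp [cpc, L]⟩
    show ext 6 (fun i : Fin 6 => y i 0) i = y i 0
    rw [ext]
    rw [dif_pos (show i < 6 by omega)]
  | succ j ih =>
    intro hj
    obtain ⟨h2, h1⟩ := ih (by omega)
    refine ⟨fun i hi => ?_, fun i hi => ?_⟩
    · show nxt6 _ _ _ i = y i (j+1)
      rcases Nat.lt_or_ge i 5 with hi5 | hi5
      · have him : i < m := by omega
        have hjn : j < n := by omega
        have hp := eo_prop _ _ _ _ _ (hEO i j him hjn)
        simp only [U] at hp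
        rw [nxt6]
        rw [if_pos hi5]
        rw [h2 (i+1) (by omega), h2 i (by omega), h1 i (by omega)]
        have hup : (if i = 0 then false else (cpc (ext 6 (fun i : Fin 6 => y i 0)) (fun j : Fin 5 => y 5 (j.val+1)) j).2 (i-1)) = (if i = 0 then false else y (i-1) j) := by
          split
          · rfl
          · exact h2 (i-1) (by omega)
        rw [hup, orsw, ← hp]
      · have hieq : i = 5 := by omega
        subst hieq
        show nxt6 _ _ _ 5 = y 5 (j+1)
        rw [nxt6]
        simp only [if_neg (by omega : ¬ (5:ℕ) < 5), if_pos rfl]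
        rw [dif_pos (show j < 5 by omega)]
        simp
    · show (cpc _ _ j).2 i = L y i (j+1)
      rw [h2 i (by omega)]
      simp [L]

theorem corner : False := by
  obtain ⟨j', i', hji⟩ := F6 (fun i : Fin 6 => y i 0) (fun j : Fin 5 => y 5 (j.val+1))
  obtain ⟨j, hj5⟩ := j'
  obtain ⟨i, hi5⟩ := i'
  simp only at hji
  obtain ⟨h2, h1⟩ := bridge6 hm hn h0 hEO j (by omega)
  have hji' : att (U y i j) (y (i+1) j) (L y i j) (y i j) = true := by
    rw [← hji, attK]
    rw [h2 (i+1) (by omega), h2 i (by omega), h1 i (by omega)]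
    congr 1
    rw [U]
    split
    · rfl
    · exact (h2 (i-1) (by omega)).symm
  have := eo_att _ _ _ _ _ (hEO i j (by omega) (by omega))
  rw [this] at hji'
  exact Bool.false_ne_true hji'

end Corner

theorem noCodeBool (m n : ℕ) (hm : 3 ≤ m) (hn : 3 ≤ n) (y : ℕ → ℕ → Bool)
    (h0 : Z0 m n y) (hEO : EOhyp m n y) : m = 4 ∧ n = 4 := by
  have transp : Z0 n m (fun i j => y j i) ∧ EOhyp n m (fun i j => y j i) := by
    constructor
    · intro i j h
      exact h0 j i h.symm
    · intro i j hi hj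
      have h := hEO j i hj hi
      rw [← eo_symm] at h
      exact h
  rcases Nat.lt_or_ge m 6 with hm6 | hm6
  · interval_cases m
    · exact (strip3 hn h0 hEO).elim
    · exact ⟨rfl, strip4 hn h0 hEO⟩
    · exact (strip5 hn h0 hEO).elim
  · rcases Nat.lt_or_ge n 6 with hn6 | hn6
    · exfalso
      interval_cases n
      · exact strip3 hm transp.1 transp.2
      · have := strip4 hm transp.1 transp.2
        omega
      · exact strip5 hm transp.1 transp.2
    · exact (corner hm6 hn6 h0 hEO).elim


theorem eo_count : ∀ a b c d e : Bool,
    a.toNat + b.toNat + c.toNat + d.toNat + e.toNat = 1 → eo a b c d e = true := by decide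

def nbrP (a b i j : ℕ) : Prop :=
  (a = i ∧ b = j) ∨ (a+1 = i ∧ b = j) ∨ (a = i+1 ∧ b = j) ∨ (a = i ∧ b+1 = j) ∨ (a = i ∧ b = j+1)

open SimpleGraph in
theorem forward (m n : ℕ) (hm : 3 ≤ m) (hn : 3 ≤ n)
    (S : Set (Fin m × Fin n))
    (H : ∀ v : Fin m × Fin n, ∃! s, s ∈ S ∧
      (s = v ∨ (pathGraph m □ pathGraph n).Adj s v)) :
    m = 4 ∧ n = 4 := by
  classical
  set y : ℕ → ℕ → Bool := fun i j =>
    if h : i < m ∧ j < n then decide ((⟨i, h.1⟩, ⟨j, h.2⟩) ∈ S) else false with hy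
  have h0 : Z0 m n y := by
    intro i j h
    rw [hy]
    simp only
    rw [dif_neg (by omega)]
  have mem : ∀ i j (hi : i < m) (hj : j < n),
      y i j = true ↔ ((⟨i, hi⟩, ⟨j, hj⟩) : Fin m × Fin n) ∈ S := by
    intro i j hi hj
    rw [hy]
    simp only
    rw [dif_pos (⟨hi, hj⟩ : i < m ∧ j < n)]
    exact decide_eq_true_iff
  have hEO : EOhyp m n y := by
    intro i j hi hj
    obtain ⟨s, ⟨hsS, hsN⟩, huniq⟩ := H (⟨i, hi⟩, ⟨j, hj⟩)
    obtain ⟨⟨p, hplt⟩, ⟨q, hqlt⟩⟩ := s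
    have hsN' : nbrP p q i j := by
      simp only [SimpleGraph.boxProd_adj, SimpleGraph.pathGraph_adj, Prod.ext_iff,
        Fin.ext_iff] at hsN
      unfold nbrP
      omega
    have cellNbr : ∀ a b (ha : a < m) (hb : b < n), nbrP a b i j →
        (((⟨a, ha⟩, ⟨b, hb⟩) : Fin m × Fin n) = (⟨i, hi⟩, ⟨j, hj⟩) ∨
          (pathGraph m □ pathGraph n).Adj (⟨a, ha⟩, ⟨b, hb⟩) (⟨i, hi⟩, ⟨j, hj⟩)) := by
      intro a b ha hb hnb
      unfold nbrP at hnb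
      simp only [SimpleGraph.boxProd_adj, SimpleGraph.pathGraph_adj, Prod.ext_iff, Fin.ext_iff]
      omega
    have key : ∀ a b (ha : a < m) (hb : b < n), nbrP a b i j →
        (y a b = true ↔ (a = p ∧ b = q)) := by
      intro a b ha hb hnb
      constructor
      · intro hyt
        have hmem := (mem a b ha hb).1 hyt
        have heq := huniq _ ⟨hmem, cellNbr a b ha hb hnb⟩
        simp only [Prod.ext_iff, Fin.ext_iff] at heq
        exact heq
      · rintro ⟨rfl, rfl⟩
        exact (mem a b ha hb).2 hsS
    have hSf : y i j = true ↔ (i = p ∧ j = q) :=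
      key i j hi hj (Or.inl ⟨rfl, rfl⟩)
    have hU : U y i j = true ↔ (¬ i = 0 ∧ i - 1 = p ∧ j = q) := by
      rw [U]
      split
      · rename_i h
        simp only [Bool.false_eq_true, false_iff]
        rintro ⟨h1, -⟩
        exact h1 h
      · rename_i h
        rw [key (i-1) j (by omega) hj (Or.inr (Or.inl ⟨by omega, rfl⟩))]
        omega
    have hD : y (i+1) j = true ↔ (i+1 = p ∧ j = q) := by
      rcases Nat.lt_or_ge (i+1) m with h | h
      · exact key (i+1) j h hj (Or.inr (Or.inr (Or.inl ⟨rfl, rfl⟩)))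
      · rw [h0 (i+1) j (Or.inl h)]
        simp only [Bool.false_eq_true, false_iff]
        rintro ⟨h1, -⟩
        omega
    have hL : L y i j = true ↔ (¬ j = 0 ∧ i = p ∧ j - 1 = q) := by
      rw [L]
      split
      · rename_i h
        simp only [Bool.false_eq_true, false_iff]
        rintro ⟨h1, -⟩
        exact h1 h
      · rename_i h
        rw [key i (j-1) hi (by omega) (Or.inr (Or.inr (Or.inr (Or.inl ⟨rfl, by omega⟩))))]
        omega
    have hR : y i (j+1) = true ↔ (i = p ∧ j+1 = q) := by
      rcases Nat.lt_or_ge (j+1) n with h | h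
      · exact key i (j+1) hi h (Or.inr (Or.inr (Or.inr (Or.inr ⟨rfl, rfl⟩))))
      · rw [h0 i (j+1) (Or.inr h)]
        simp only [Bool.false_eq_true, false_iff]
        rintro ⟨-, h2⟩
        omega
    apply eo_count
    rcases hsN' with ⟨h1, h2⟩ | ⟨h1, h2⟩ | ⟨h1, h2⟩ | ⟨h1, h2⟩ | ⟨h1, h2⟩ <;>
      [ (have b5 : y i j = true := hSf.2 ⟨by omega, by omega⟩;
         have b1 : U y i j = false := by
           rw [Bool.eq_false_iff]; intro hh; obtain ⟨u1, u2, u3⟩ := hU.1 hh; omega;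
         have b2 : y (i+1) j = false := by
           rw [Bool.eq_false_iff]; intro hh; obtain ⟨u1, u2⟩ := hD.1 hh; omega;
         have b3 : L y i j = false := by
           rw [Bool.eq_false_iff]; intro hh; obtain ⟨u1, u2, u3⟩ := hL.1 hh; omega;
         have b4 : y i (j+1) = false := by
           rw [Bool.eq_false_iff]; intro hh; obtain ⟨u1, u2⟩ := hR.1 hh; omega);
        (have b1 : U y i j = true := hU.2 ⟨by omega, by omega, by omega⟩;
         have b5 : y i j = false := by
           rw [Bool.eq_false_iff]; intro hh; obtain ⟨u1, u2⟩ := hSf.1 hh; omega;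
         have b2 : y (i+1) j = false := by
           rw [Bool.eq_false_iff]; intro hh; obtain ⟨u1, u2⟩ := hD.1 hh; omega;
         have b3 : L y i j = false := by
           rw [Bool.eq_false_iff]; intro hh; obtain ⟨u1, u2, u3⟩ := hL.1 hh; omega;
         have b4 : y i (j+1) = false := by
           rw [Bool.eq_false_iff]; intro hh; obtain ⟨u1, u2⟩ := hR.1 hh; omega);
        (have b2 : y (i+1) j = true := hD.2 ⟨by omega, by omega⟩;
         have b5 : y i j = false := by
           rw [Bool.eq_false_iff]; intro hh; obtain ⟨u1, u2⟩ := hSf.1 hh; omega;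
         have b1 : U y i j = false := by
           rw [Bool.eq_false_iff]; intro hh; obtain ⟨u1, u2, u3⟩ := hU.1 hh; omega;
         have b3 : L y i j = false := by
           rw [Bool.eq_false_iff]; intro hh; obtain ⟨u1, u2, u3⟩ := hL.1 hh; omega;
         have b4 : y i (j+1) = false := by
           rw [Bool.eq_false_iff]; intro hh; obtain ⟨u1, u2⟩ := hR.1 hh; omega);
        (have b3 : L y i j = true := hL.2 ⟨by omega, by omega, by omega⟩;
         have b5 : y i j = false := by
           rw [Bool.eq_false_iff]; intro hh; obtain ⟨u1, u2⟩ := hSf.1 hh; omega;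
         have b1 : U y i j = false := by
           rw [Bool.eq_false_iff]; intro hh; obtain ⟨u1, u2, u3⟩ := hU.1 hh; omega;
         have b2 : y (i+1) j = false := by
           rw [Bool.eq_false_iff]; intro hh; obtain ⟨u1, u2⟩ := hD.1 hh; omega;
         have b4 : y i (j+1) = false := by
           rw [Bool.eq_false_iff]; intro hh; obtain ⟨u1, u2⟩ := hR.1 hh; omega);
        (have b4 : y i (j+1) = true := hR.2 ⟨by omega, by omega⟩;
         have b5 : y i j = false := by
           rw [Bool.eq_false_iff]; intro hh; obtain ⟨u1, u2⟩ := hSf.1 hh; omega;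
         have b1 : U y i j = false := by
           rw [Bool.eq_false_iff]; intro hh; obtain ⟨u1, u2, u3⟩ := hU.1 hh; omega;
         have b2 : y (i+1) j = false := by
           rw [Bool.eq_false_iff]; intro hh; obtain ⟨u1, u2⟩ := hD.1 hh; omega;
         have b3 : L y i j = false := by
           rw [Bool.eq_false_iff]; intro hh; obtain ⟨u1, u2, u3⟩ := hL.1 hh; omega)] <;>
      rw [b1, b2, b3, b4, b5] <;> rfl
  exact noCodeBool m n hm hn y h0 hEO


open SimpleGraph in
theorem back : ∃ S : Set (Fin 4 × Fin 4),
    ∀ v : Fin 4 × Fin 4, ∃! s, s ∈ S ∧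
      (s = v ∨ (pathGraph 4 □ pathGraph 4).Adj s v) := by
  use {p | p = ((0 : Fin 4), (1 : Fin 4)) ∨ p = (1, 3) ∨ p = (2, 0) ∨ p = (3, 2)}
  intro v
  revert v
  simp only [ExistsUnique, Set.mem_setOf_eq, SimpleGraph.boxProd_adj, SimpleGraph.pathGraph_adj]
  decide

end S14

/-- For `m, n ≥ 3`, the grid graph `P_m □ P_n` has an efficient
dominating set (a set of vertices whose closed neighborhoods partition the vertex set)
if and only if `m = n = 4`. -/
theorem stmt_14 (m n : ℕ) (hm : 3 ≤ m) (hn : 3 ≤ n) :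
    (∃ S : Set (Fin m × Fin n),
        ∀ v : Fin m × Fin n, ∃! s, s ∈ S ∧
          (s = v ∨ (SimpleGraph.pathGraph m □ SimpleGraph.pathGraph n).Adj s v)) ↔
      (m = 4 ∧ n = 4) := by
  constructor
  · rintro ⟨S, H⟩
    exact S14.forward m n hm hn S H
  · rintro ⟨rfl, rfl⟩
    exact S14.back
end
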